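/- arXiv:2510.07641 — 6 statements merged into one kernel-verified Lean document; each statement's English description precedes it below -/
import Mathlib

section
/- The formal system ATM proves the sentence ¬¬M[L₁]; that is, ATM proves that the classical liar sentence is not not meaningful. -/
namespace ATM

/-- Terms of ATM: built from ⊥̇ and constants L₁, L₂, … by the dotted
connectives ∧̇, ∨̇, →̇ and the dotted predicates Ȧ[·], Ṫ[·], Ṁ[·]. -/
inductive Term : Type
  | bot  : Term
  | L    : ℕ → Term
  | and  : Term → Term → Term
  | or   : Term → Term → Term
  | imp  : Term → Term → Term
  | A    : Term → Term
  | T    : Term → Term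
  | M    : Term → Term

/-- Sentences of ATM: built from ⊥, A[t], T[t], M[t] by ∧, ∨, →. -/
inductive Sentence : Type
  | bot  : Sentence
  | A    : Term → Sentence
  | T    : Term → Sentence
  | M    : Term → Sentence
  | and  : Sentence → Sentence → Sentence
  | or   : Sentence → Sentence → Sentence
  | imp  : Sentence → Sentence → Sentence

/-- ¬̇t abbreviates t →̇ ⊥̇. -/
def Term.neg (t : Term) : Term := Term.imp t Term.bot

/-- s ↔̇ t abbreviates (s →̇ t) ∧̇ (t →̇ s). -/
def Term.iff (s t : Term) : Term := Term.and (Term.imp s t) (Term.imp t s)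

/-- ¬φ abbreviates φ → ⊥. -/
def Sentence.neg (φ : Sentence) : Sentence := Sentence.imp φ Sentence.bot

/-- φ ↔ ψ abbreviates (φ → ψ) ∧ (ψ → φ). -/
def Sentence.iff (φ ψ : Sentence) : Sentence :=
  Sentence.and (Sentence.imp φ ψ) (Sentence.imp ψ φ)

/-- The canonical term φ̇ of a sentence φ, obtained by dotting every symbol. -/
def Sentence.dot : Sentence → Term
  | Sentence.bot     => Term.bot
  | Sentence.A t     => Term.A t
  | Sentence.T t     => Term.T t
  | Sentence.M t     => Term.M t
  | Sentence.and φ ψ => Term.and φ.dot ψ.dot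
  | Sentence.or φ ψ  => Term.or φ.dot ψ.dot
  | Sentence.imp φ ψ => Term.imp φ.dot ψ.dot

/-- Evaluation t̂ of a term t to a sentence, relative to an assignment
θ of a sentence θᵢ to each constant Lᵢ.  (The θᵢ may be chosen in any
manner; the theorems below hypothesize θ₁ = ¬T[L₁] and θ₂ = ¬A[L₂].) -/
def Term.eval (θ : ℕ → Sentence) : Term → Sentence
  | Term.bot     => Sentence.bot
  | Term.L i     => θ i
  | Term.A t     => Sentence.A t
  | Term.T t     => Sentence.T t
  | Term.M t     => Sentence.M t
  | Term.and s t => Sentence.and (s.eval θ) (t.eval θ)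
  | Term.or s t  => Sentence.or (s.eval θ) (t.eval θ)
  | Term.imp s t => Sentence.imp (s.eval θ) (t.eval θ)

/-- Grounded sentences: the smallest set of sentences containing ⊥, all A[t]
and all M[t], closed under ∧, ∨, →, and containing T[t] whenever t̂ is in
the set. -/
inductive Grounded (θ : ℕ → Sentence) : Sentence → Prop
  | bot : Grounded θ Sentence.bot
  | A (t : Term) : Grounded θ (Sentence.A t)
  | M (t : Term) : Grounded θ (Sentence.M t)
  | and {φ ψ : Sentence} : Grounded θ φ → Grounded θ ψ → Grounded θ (Sentence.and φ ψ)
  | or {φ ψ : Sentence} : Grounded θ φ → Grounded θ ψ → Grounded θ (Sentence.or φ ψ)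
  | imp {φ ψ : Sentence} : Grounded θ φ → Grounded θ ψ → Grounded θ (Sentence.imp φ ψ)
  | T {t : Term} : Grounded θ (t.eval θ) → Grounded θ (Sentence.T t)

/-- `HilbertAxT s t u a` : the term `a` is the instance `Ȧ(s,t,u)` at the
terms `s`, `t`, `u` of one of the axiom schemes `A` of a fixed standard
Hilbert-style axiomatization of intuitionistic propositional logic. -/
inductive HilbertAxT : Term → Term → Term → Term → Prop
  | imp1 (s t u : Term) : HilbertAxT s t u (Term.imp s (Term.imp t s))
  | imp2 (s t u : Term) : HilbertAxT s t u
      (Term.imp (Term.imp s (Term.imp t u))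
        (Term.imp (Term.imp s t) (Term.imp s u)))
  | andE1 (s t u : Term) : HilbertAxT s t u (Term.imp (Term.and s t) s)
  | andE2 (s t u : Term) : HilbertAxT s t u (Term.imp (Term.and s t) t)
  | andI (s t u : Term) : HilbertAxT s t u (Term.imp s (Term.imp t (Term.and s t)))
  | orI1 (s t u : Term) : HilbertAxT s t u (Term.imp s (Term.or s t))
  | orI2 (s t u : Term) : HilbertAxT s t u (Term.imp t (Term.or s t))
  | orE (s t u : Term) : HilbertAxT s t u
      (Term.imp (Term.imp s u)
        (Term.imp (Term.imp t u) (Term.imp (Term.or s t) u)))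
  | exfalso (s t u : Term) : HilbertAxT s t u (Term.imp Term.bot s)

/-- Theorems of ATM: the axioms (logical axioms and nonlogical schemes
(1)–(9)) closed under the three deduction rules (conjunction, modus
ponens, release). -/
inductive Thm (θ : ℕ → Sentence) : Sentence → Prop
  -- logical axioms: (M[s] ∧ M[t] ∧ M[u]) → A[Ȧ(s,t,u)]
  | logical {s t u a : Term} (h : HilbertAxT s t u a) :
      Thm θ (Sentence.imp
        (Sentence.and (Sentence.and (Sentence.M s) (Sentence.M t)) (Sentence.M u))
        (Sentence.A a))
  -- (1) M[t] for t̂ grounded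
  | ax1 {t : Term} (h : Grounded θ (t.eval θ)) : Thm θ (Sentence.M t)
  -- (2) (M[s] ∧ M[t]) ↔ M[s ∧̇ t] ↔ M[s ∨̇ t] ↔ M[s →̇ t]
  | ax2and (s t : Term) :
      Thm θ (Sentence.iff (Sentence.and (Sentence.M s) (Sentence.M t))
        (Sentence.M (Term.and s t)))
  | ax2or (s t : Term) :
      Thm θ (Sentence.iff (Sentence.and (Sentence.M s) (Sentence.M t))
        (Sentence.M (Term.or s t)))
  | ax2imp (s t : Term) :
      Thm θ (Sentence.iff (Sentence.and (Sentence.M s) (Sentence.M t))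
        (Sentence.M (Term.imp s t)))
  -- (3) A[t] → M[t]
  | ax3 (t : Term) : Thm θ (Sentence.imp (Sentence.A t) (Sentence.M t))
  -- (4) (A[s] ∧ A[t]) → A[s ∧̇ t]
  | ax4 (s t : Term) :
      Thm θ (Sentence.imp (Sentence.and (Sentence.A s) (Sentence.A t))
        (Sentence.A (Term.and s t)))
  -- (5) (A[s] ∧ A[s →̇ t]) → A[t]
  | ax5 (s t : Term) :
      Thm θ (Sentence.imp (Sentence.and (Sentence.A s) (Sentence.A (Term.imp s t)))
        (Sentence.A t))
  -- (6) M[t] → A[t →̇ Ȧ[t]]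
  | ax6 (t : Term) :
      Thm θ (Sentence.imp (Sentence.M t) (Sentence.A (Term.imp t (Term.A t))))
  -- (7) M[t] → A[t ↔̇ Ṫ[t]]
  | ax7 (t : Term) :
      Thm θ (Sentence.imp (Sentence.M t) (Sentence.A (Term.iff t (Term.T t))))
  -- (8) ¬M[t] → A[¬̇Ṫ[t]]
  | ax8 (t : Term) :
      Thm θ (Sentence.imp (Sentence.neg (Sentence.M t))
        (Sentence.A (Term.neg (Term.T t))))
  -- (9) M[t] → A[t ↔̇ t'] whenever t̂ = t̂'
  | ax9 {t t' : Term} (h : t.eval θ = t'.eval θ) :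
      Thm θ (Sentence.imp (Sentence.M t) (Sentence.A (Term.iff t t')))
  -- deduction rules
  | conj {φ ψ : Sentence} : Thm θ φ → Thm θ ψ → Thm θ (Sentence.and φ ψ)
  | mp {φ ψ : Sentence} : Thm θ φ → Thm θ (Sentence.imp φ ψ) → Thm θ ψ
  | release {t : Term} : Thm θ (Sentence.A t) → Thm θ (t.eval θ)

/-- θ₁ is the classical liar sentence ¬T[L₁]. -/
def liar1 : Sentence := Sentence.neg (Sentence.T (Term.L 1))

/-- θ₂ is the assertible liar sentence ¬A[L₂]. -/
def liar2 : Sentence := Sentence.neg (Sentence.A (Term.L 2))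

section Aux
variable {θ : ℕ → Sentence}

lemma eval_dot (θ : ℕ → Sentence) : ∀ φ : Sentence, φ.dot.eval θ = φ
  | Sentence.bot => rfl
  | Sentence.A _ => rfl
  | Sentence.T _ => rfl
  | Sentence.M _ => rfl
  | Sentence.and φ ψ => by simp [Sentence.dot, Term.eval, eval_dot θ φ, eval_dot θ ψ]
  | Sentence.or φ ψ => by simp [Sentence.dot, Term.eval, eval_dot θ φ, eval_dot θ ψ]
  | Sentence.imp φ ψ => by simp [Sentence.dot, Term.eval, eval_dot θ φ, eval_dot θ ψ]

lemma thmM {φ : Sentence} (h : Grounded θ φ) : Thm θ (Sentence.M φ.dot) :=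
  Thm.ax1 (by rw [eval_dot]; exact h)

lemma thm_ax {s t u a : Term} (h : HilbertAxT s t u a)
    (hs : Thm θ (Sentence.M s)) (ht : Thm θ (Sentence.M t)) (hu : Thm θ (Sentence.M u)) :
    Thm θ (a.eval θ) :=
  Thm.release (Thm.mp (Thm.conj (Thm.conj hs ht) hu) (Thm.logical h))

lemma thm_imp1 {φ ψ : Sentence} (hφ : Grounded θ φ) (hψ : Grounded θ ψ) :
    Thm θ (Sentence.imp φ (Sentence.imp ψ φ)) := by
  have := thm_ax (HilbertAxT.imp1 φ.dot ψ.dot Term.bot) (thmM hφ) (thmM hψ)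
    (thmM Grounded.bot)
  simpa [Term.eval, eval_dot, Sentence.dot] using this

lemma thm_imp2 {φ ψ χ : Sentence} (hφ : Grounded θ φ) (hψ : Grounded θ ψ)
    (hχ : Grounded θ χ) :
    Thm θ (Sentence.imp (Sentence.imp φ (Sentence.imp ψ χ))
      (Sentence.imp (Sentence.imp φ ψ) (Sentence.imp φ χ))) := by
  have := thm_ax (HilbertAxT.imp2 φ.dot ψ.dot χ.dot) (thmM hφ) (thmM hψ) (thmM hχ)
  simpa [Term.eval, eval_dot, Sentence.dot] using this

lemma thm_andE1 {φ ψ : Sentence} (hφ : Grounded θ φ) (hψ : Grounded θ ψ) :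
    Thm θ (Sentence.imp (Sentence.and φ ψ) φ) := by
  have := thm_ax (HilbertAxT.andE1 φ.dot ψ.dot Term.bot) (thmM hφ) (thmM hψ)
    (thmM Grounded.bot)
  simpa [Term.eval, eval_dot, Sentence.dot] using this

lemma thm_andE2 {φ ψ : Sentence} (hφ : Grounded θ φ) (hψ : Grounded θ ψ) :
    Thm θ (Sentence.imp (Sentence.and φ ψ) ψ) := by
  have := thm_ax (HilbertAxT.andE2 φ.dot ψ.dot Term.bot) (thmM hφ) (thmM hψ)
    (thmM Grounded.bot)
  simpa [Term.eval, eval_dot, Sentence.dot] using this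

/-- identity φ → φ via S K K -/
lemma thm_id {φ : Sentence} (hφ : Grounded θ φ) : Thm θ (Sentence.imp φ φ) := by
  have hff : Grounded θ (Sentence.imp φ φ) := Grounded.imp hφ hφ
  have k1 := thm_imp1 hφ hff           -- φ → ((φ→φ) → φ)
  have k2 := thm_imp1 hφ hφ            -- φ → (φ → φ)
  have s := thm_imp2 hφ hff hφ
  exact Thm.mp k2 (Thm.mp k1 s)

/-- composition: from φ→ψ and ψ→χ, get φ→χ -/
lemma thm_comp {φ ψ χ : Sentence} (hφ : Grounded θ φ) (hψ : Grounded θ ψ)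
    (hχ : Grounded θ χ)
    (h1 : Thm θ (Sentence.imp φ ψ)) (h2 : Thm θ (Sentence.imp ψ χ)) :
    Thm θ (Sentence.imp φ χ) := by
  have a : Thm θ (Sentence.imp φ (Sentence.imp ψ χ)) :=
    Thm.mp h2 (thm_imp1 (Grounded.imp hψ hχ) hφ)
  exact Thm.mp h1 (Thm.mp a (thm_imp2 hφ hψ hχ))

/-- extract a conjunct -/
lemma thm_projL {φ ψ : Sentence} (hφ : Grounded θ φ) (hψ : Grounded θ ψ)
    (h : Thm θ (Sentence.and φ ψ)) : Thm θ φ := Thm.mp h (thm_andE1 hφ hψ)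

lemma thm_projR {φ ψ : Sentence} (hφ : Grounded θ φ) (hψ : Grounded θ ψ)
    (h : Thm θ (Sentence.and φ ψ)) : Thm θ ψ := Thm.mp h (thm_andE2 hφ hψ)

end Aux


theorem atm_proves_not_not_meaningful_liar (θ : ℕ → Sentence)
    (h1 : θ 1 = liar1) (h2 : θ 2 = liar2) :
    Thm θ (Sentence.neg (Sentence.neg (Sentence.M (Term.L 1)))) := by
  -- abbreviations
  set n : Term := Term.neg (Term.T (Term.L 1)) with hn
  have gA : ∀ t : Term, Grounded θ (Sentence.A t) := Grounded.A
  have gM : ∀ t : Term, Grounded θ (Sentence.M t) := Grounded.M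
  have gb : Grounded θ Sentence.bot := Grounded.bot
  set P : Sentence := Sentence.M (Term.L 1) with hP
  have gP : Grounded θ P := gM _
  have gnP : Grounded θ (Sentence.neg P) := Grounded.imp gP gb
  set i1 : Term := Term.imp n (Term.L 1) with hi1
  set i2 : Term := Term.imp (Term.L 1) n with hi2
  -- c1 : ¬P → A[n]  (axiom 8)
  have c1 : Thm θ (Sentence.imp (Sentence.neg P) (Sentence.A n)) := Thm.ax8 (Term.L 1)
  -- c2 : A[n] → M[n]
  have c2 : Thm θ (Sentence.imp (Sentence.A n) (Sentence.M n)) := Thm.ax3 n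
  -- c3 : M[n] → A[n ↔̇ L₁]  (axiom 9, since n and L₁ have the same evaluation)
  have heq : n.eval θ = (Term.L 1).eval θ := by
    simp [hn, Term.eval, Term.neg, h1, liar1, Sentence.neg]
  have c3 : Thm θ (Sentence.imp (Sentence.M n) (Sentence.A (Term.iff n (Term.L 1)))) :=
    Thm.ax9 heq
  -- c4 : A[iff] → M[iff]
  have c4 : Thm θ (Sentence.imp (Sentence.A (Term.iff n (Term.L 1)))
      (Sentence.M (Term.iff n (Term.L 1)))) := Thm.ax3 _
  -- c5 : M[iff] → (M[i1] ∧ M[i2])  (axiom 2 for ∧, backward direction)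
  have hax2 := Thm.ax2and (θ := θ) i1 i2
  have c5 : Thm θ (Sentence.imp (Sentence.M (Term.iff n (Term.L 1)))
      (Sentence.and (Sentence.M i1) (Sentence.M i2))) := by
    have := thm_projR (θ := θ)
      (Grounded.imp (Grounded.and (gM i1) (gM i2)) (gM (Term.and i1 i2)))
      (Grounded.imp (gM (Term.and i1 i2)) (Grounded.and (gM i1) (gM i2))) hax2
    exact this
  -- c6 : (M[i1] ∧ M[i2]) → M[i2]
  have c6 : Thm θ (Sentence.imp (Sentence.and (Sentence.M i1) (Sentence.M i2))
      (Sentence.M i2)) := thm_andE2 (gM i1) (gM i2)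
  -- c7 : M[i2] → (M[L₁] ∧ M[n])  (axiom 2 for →, backward direction)
  have hax2i := Thm.ax2imp (θ := θ) (Term.L 1) n
  have c7 : Thm θ (Sentence.imp (Sentence.M i2)
      (Sentence.and (Sentence.M (Term.L 1)) (Sentence.M n))) := by
    have := thm_projR (θ := θ)
      (Grounded.imp (Grounded.and (gM (Term.L 1)) (gM n)) (gM i2))
      (Grounded.imp (gM i2) (Grounded.and (gM (Term.L 1)) (gM n))) hax2i
    exact this
  -- c8 : (M[L₁] ∧ M[n]) → M[L₁]
  have c8 : Thm θ (Sentence.imp (Sentence.and (Sentence.M (Term.L 1)) (Sentence.M n)) P) :=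
    thm_andE1 (gM (Term.L 1)) (gM n)
  -- compose: C : ¬P → P
  have d1 := thm_comp gnP (gA n) (gM n) c1 c2
  have d2 := thm_comp gnP (gM n) (gA _) d1 c3
  have d3 := thm_comp gnP (gA _) (gM _) d2 c4
  have d4 := thm_comp gnP (gM _) (Grounded.and (gM i1) (gM i2)) d3 c5
  have d5 := thm_comp gnP (Grounded.and (gM i1) (gM i2)) (gM i2) d4 c6
  have d6 := thm_comp gnP (gM i2) (Grounded.and (gM (Term.L 1)) (gM n)) d5 c7
  have C : Thm θ (Sentence.imp (Sentence.neg P) P) :=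
    thm_comp gnP (Grounded.and (gM (Term.L 1)) (gM n)) gP d6 c8
  -- D : ¬P → (P → ⊥), which is just the identity on ¬P
  have D : Thm θ (Sentence.imp (Sentence.neg P) (Sentence.imp P Sentence.bot)) :=
    thm_id gnP
  -- S combinator: (¬P → (P → ⊥)) → ((¬P → P) → (¬P → ⊥))
  have S := thm_imp2 (θ := θ) gnP gP gb
  exact Thm.mp C (Thm.mp D S)


end ATM
end

section
/- The formal system ATM proves the sentence ¬¬A[L₂]; that is, ATM proves that the assertible liar sentence is not not assertible. -/
namespace ATM

/-- `ok t` : the term `t` contains no Ṫ and no constant other than L₂,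
so that (given θ₂ = ¬A[L₂]) its evaluation is grounded. -/
def ok : Term → Bool
  | Term.bot => true
  | Term.L i => i == 2
  | Term.and s t => ok s && ok t
  | Term.or s t => ok s && ok t
  | Term.imp s t => ok s && ok t
  | Term.A _ => true
  | Term.M _ => true
  | Term.T _ => false

lemma gr_ok {θ : ℕ → Sentence} (h2 : θ 2 = liar2) :
    ∀ t : Term, ok t = true → Grounded θ (t.eval θ) := by
  intro t
  induction t with
  | bot => intro _; exact Grounded.bot
  | L i =>
      intro h
      simp [ok] at h
      subst h
      show Grounded θ (θ 2)
      rw [h2]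
      exact Grounded.imp (Grounded.A _) Grounded.bot
  | and s t ihs iht =>
      intro h; simp [ok] at h; exact Grounded.and (ihs h.1) (iht h.2)
  | or s t ihs iht =>
      intro h; simp [ok] at h; exact Grounded.or (ihs h.1) (iht h.2)
  | imp s t ihs iht =>
      intro h; simp [ok] at h; exact Grounded.imp (ihs h.1) (iht h.2)
  | A t _ => intro _; exact Grounded.A t
  | T t _ => intro h; simp [ok] at h
  | M t _ => intro _; exact Grounded.M t

lemma Mok {θ : ℕ → Sentence} (h2 : θ 2 = liar2) {t : Term}
    (h : ok t = true) : Thm θ (Sentence.M t) :=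
  Thm.ax1 (gr_ok h2 t h)

/-- Modus ponens at the assertibility level. -/
lemma Amp {θ : ℕ → Sentence} {s t : Term}
    (h1 : Thm θ (Sentence.A s)) (h2 : Thm θ (Sentence.A (Term.imp s t))) :
    Thm θ (Sentence.A t) :=
  Thm.mp (Thm.conj h1 h2) (Thm.ax5 s t)

/-- Logical axioms are assertible when the meaningfulness conditions hold. -/
lemma Alog {θ : ℕ → Sentence} (h2 : θ 2 = liar2) {s t u a : Term}
    (hx : HilbertAxT s t u a) (hs : ok s = true) (ht : ok t = true)
    (hu : ok u = true) : Thm θ (Sentence.A a) :=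
  Thm.mp (Thm.conj (Thm.conj (Mok h2 hs) (Mok h2 ht)) (Mok h2 hu))
    (Thm.logical hx)

theorem atm_proves_not_not_assert_liar (θ : ℕ → Sentence)
    (h1 : θ 1 = liar1) (h2 : θ 2 = liar2) :
    Thm θ (Sentence.neg (Sentence.neg (Sentence.A (Term.L 2)))) := by
  set l : Term := Term.L 2 with hl
  set a : Term := Term.A (Term.L 2) with ha
  set b : Term := Term.bot with hb
  set na : Term := Term.imp a b with hna
  -- M[l]
  have Ml : Thm θ (Sentence.M l) := Mok h2 (by decide)
  -- H1 : A[l →̇ a]  (axiom 6)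
  have H1 : Thm θ (Sentence.A (Term.imp l a)) := Thm.mp Ml (Thm.ax6 l)
  -- axiom 9 : A[l ↔̇ ¬̇a], since l̂ = ¬A[L₂] = (¬̇a)^
  have heval : l.eval θ = na.eval θ := by
    show θ 2 = Sentence.imp (Sentence.A (Term.L 2)) Sentence.bot
    rw [h2]; rfl
  have H9 : Thm θ (Sentence.A (Term.and (Term.imp l na) (Term.imp na l))) :=
    Thm.mp Ml (Thm.ax9 heval)
  -- extract the two implications
  have H2 : Thm θ (Sentence.A (Term.imp l na)) :=
    Amp H9 (Alog h2 (HilbertAxT.andE1 (Term.imp l na) (Term.imp na l) b)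
      (by decide) (by decide) (by decide))
  have H3 : Thm θ (Sentence.A (Term.imp na l)) :=
    Amp H9 (Alog h2 (HilbertAxT.andE2 (Term.imp l na) (Term.imp na l) b)
      (by decide) (by decide) (by decide))
  -- H4 : A[l →̇ b], from H2 : A[l →̇ (a →̇ b)] and H1 : A[l →̇ a]
  have H4 : Thm θ (Sentence.A (Term.imp l b)) :=
    Amp H1 (Amp H2 (Alog h2 (HilbertAxT.imp2 l a b)
      (by decide) (by decide) (by decide)))
  -- H5 : A[na →̇ (l →̇ b)]
  have H5 : Thm θ (Sentence.A (Term.imp na (Term.imp l b))) :=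
    Amp H4 (Alog h2 (HilbertAxT.imp1 (Term.imp l b) na b)
      (by decide) (by decide) (by decide))
  -- H6 : A[na →̇ b] via imp2
  have H6 : Thm θ (Sentence.A (Term.imp na b)) :=
    Amp H3 (Amp H5 (Alog h2 (HilbertAxT.imp2 na l b)
      (by decide) (by decide) (by decide)))
  -- release
  exact Thm.release H6

end ATM
end

section
/- The formal system ATM is consistent: the sentence ⊥ is not a theorem of ATM. -/
namespace ATM

section Model

variable (θ : ℕ → Sentence)

/-- Fuel sufficiency predicate: enough fuel to evaluate the forcing relation. -/
def OKT : ℕ → Sentence → Prop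
  | 0, _ => False
  | n+1, Sentence.bot => True
  | n+1, Sentence.A _ => True
  | n+1, Sentence.M _ => True
  | n+1, Sentence.T t => Grounded θ (t.eval θ) → OKT n (t.eval θ)
  | n+1, Sentence.and φ ψ => OKT n φ ∧ OKT n ψ
  | n+1, Sentence.or φ ψ => OKT n φ ∧ OKT n ψ
  | n+1, Sentence.imp φ ψ => OKT n φ ∧ OKT n ψ

lemma okt_mono : ∀ n φ, OKT θ n φ → OKT θ (n+1) φ := by
  intro n
  induction n with
  | zero => intro φ h; exact absurd h (by simp [OKT])
  | succ k ih =>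
    intro φ h
    cases φ with
    | bot => simp [OKT]
    | A t => simp [OKT]
    | M t => simp [OKT]
    | T t =>
      simp only [OKT] at h ⊢
      intro hg; exact ih _ (h hg)
    | and φ ψ =>
      simp only [OKT] at h ⊢
      exact ⟨ih _ h.1, ih _ h.2⟩
    | or φ ψ =>
      simp only [OKT] at h ⊢
      exact ⟨ih _ h.1, ih _ h.2⟩
    | imp φ ψ =>
      simp only [OKT] at h ⊢
      exact ⟨ih _ h.1, ih _ h.2⟩

lemma okt_le {n m : ℕ} (h : n ≤ m) {φ : Sentence} (hk : OKT θ n φ) : OKT θ m φ := by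
  induction h with
  | refl => exact hk
  | step _ ih => exact okt_mono θ _ _ ih
  
lemma okt_grounded {φ : Sentence} (h : Grounded θ φ) : ∃ n, OKT θ n φ := by
  induction h with
  | bot => exact ⟨1, by simp [OKT]⟩
  | A t => exact ⟨1, by simp [OKT]⟩
  | M t => exact ⟨1, by simp [OKT]⟩
  | and h1 h2 ih1 ih2 =>
    obtain ⟨n1, hn1⟩ := ih1; obtain ⟨n2, hn2⟩ := ih2
    exact ⟨max n1 n2 + 1, ⟨okt_le θ (le_max_left _ _) hn1, okt_le θ (le_max_right _ _) hn2⟩⟩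
  | or h1 h2 ih1 ih2 =>
    obtain ⟨n1, hn1⟩ := ih1; obtain ⟨n2, hn2⟩ := ih2
    exact ⟨max n1 n2 + 1, ⟨okt_le θ (le_max_left _ _) hn1, okt_le θ (le_max_right _ _) hn2⟩⟩
  | imp h1 h2 ih1 ih2 =>
    obtain ⟨n1, hn1⟩ := ih1; obtain ⟨n2, hn2⟩ := ih2
    exact ⟨max n1 n2 + 1, ⟨okt_le θ (le_max_left _ _) hn1, okt_le θ (le_max_right _ _) hn2⟩⟩
  | T hg ih =>
    obtain ⟨n, hn⟩ := ih
    exact ⟨n+1, by simp [OKT]; intro; exact hn⟩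

lemma okt_exists : ∀ φ, ∃ n, OKT θ n φ := by
  intro φ
  induction φ with
  | bot => exact ⟨1, by simp [OKT]⟩
  | A t => exact ⟨1, by simp [OKT]⟩
  | M t => exact ⟨1, by simp [OKT]⟩
  | T t =>
    by_cases hg : Grounded θ (t.eval θ)
    · obtain ⟨n, hn⟩ := okt_grounded θ hg
      exact ⟨n+1, by simp [OKT]; intro; exact hn⟩
    · exact ⟨1, by simp [OKT]; intro h; exact absurd h hg⟩
  | and φ ψ ih1 ih2 =>
    obtain ⟨n1, hn1⟩ := ih1; obtain ⟨n2, hn2⟩ := ih2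
    exact ⟨max n1 n2 + 1, ⟨okt_le θ (le_max_left _ _) hn1, okt_le θ (le_max_right _ _) hn2⟩⟩
  | or φ ψ ih1 ih2 =>
    obtain ⟨n1, hn1⟩ := ih1; obtain ⟨n2, hn2⟩ := ih2
    exact ⟨max n1 n2 + 1, ⟨okt_le θ (le_max_left _ _) hn1, okt_le θ (le_max_right _ _) hn2⟩⟩
  | imp φ ψ ih1 ih2 =>
    obtain ⟨n1, hn1⟩ := ih1; obtain ⟨n2, hn2⟩ := ih2
    exact ⟨max n1 n2 + 1, ⟨okt_le θ (le_max_left _ _) hn1, okt_le θ (le_max_right _ _) hn2⟩⟩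

/-- Forcing at the terminal world 0 (all A- and M-atoms hold), fuel-indexed. -/
def F0w : ℕ → Sentence → Prop
  | 0, _ => True
  | _+1, Sentence.bot => False
  | _+1, Sentence.A _ => True
  | _+1, Sentence.M _ => True
  | n+1, Sentence.T t => Grounded θ (t.eval θ) ∧ F0w n (t.eval θ)
  | n+1, Sentence.and φ ψ => F0w n φ ∧ F0w n ψ
  | n+1, Sentence.or φ ψ => F0w n φ ∨ F0w n ψ
  | n+1, Sentence.imp φ ψ => F0w n φ → F0w n ψ

/-- Forcing at a successor world, given forcing `prev` at the previous world. -/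
def Fw (prev : Sentence → Prop) : ℕ → Sentence → Prop
  | 0, _ => True
  | _+1, Sentence.bot => False
  | _+1, Sentence.A t => Grounded θ (t.eval θ) ∧ prev (t.eval θ)
  | _+1, Sentence.M t => Grounded θ (t.eval θ)
  | n+1, Sentence.T t => Grounded θ (t.eval θ) ∧ Fw prev n (t.eval θ)
  | n+1, Sentence.and φ ψ => Fw prev n φ ∧ Fw prev n ψ
  | n+1, Sentence.or φ ψ => Fw prev n φ ∨ Fw prev n ψ
  | n+1, Sentence.imp φ ψ => prev (Sentence.imp φ ψ) ∧ (Fw prev n φ → Fw prev n ψ)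

lemma F0w_stab : ∀ a b φ, OKT θ a φ → OKT θ b φ → (F0w θ a φ ↔ F0w θ b φ) := by
  intro a
  induction a with
  | zero => intro b φ h; exact absurd h (by simp [OKT])
  | succ k ih =>
    intro b φ ha hb
    cases b with
    | zero => exact absurd hb (by simp [OKT])
    | succ m =>
      cases φ with
      | bot => simp [F0w]
      | A t => simp [F0w]
      | M t => simp [F0w]
      | T t =>
        simp only [OKT] at ha hb
        simp only [F0w]
        by_cases hg : Grounded θ (t.eval θ)
        · rw [ih m _ (ha hg) (hb hg)]
        · simp [hg]
      | and φ ψ =>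
        simp only [OKT] at ha hb
        simp only [F0w]
        rw [ih m _ ha.1 hb.1, ih m _ ha.2 hb.2]
      | or φ ψ =>
        simp only [OKT] at ha hb
        simp only [F0w]
        rw [ih m _ ha.1 hb.1, ih m _ ha.2 hb.2]
      | imp φ ψ =>
        simp only [OKT] at ha hb
        simp only [F0w]
        rw [ih m _ ha.1 hb.1, ih m _ ha.2 hb.2]

lemma Fw_stab (prev : Sentence → Prop) :
    ∀ a b φ, OKT θ a φ → OKT θ b φ → (Fw θ prev a φ ↔ Fw θ prev b φ) := by
  intro a
  induction a with
  | zero => intro b φ h; exact absurd h (by simp [OKT])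
  | succ k ih =>
    intro b φ ha hb
    cases b with
    | zero => exact absurd hb (by simp [OKT])
    | succ m =>
      cases φ with
      | bot => simp [Fw]
      | A t => simp [Fw]
      | M t => simp [Fw]
      | T t =>
        simp only [OKT] at ha hb
        simp only [Fw]
        by_cases hg : Grounded θ (t.eval θ)
        · rw [ih m _ (ha hg) (hb hg)]
        · simp [hg]
      | and φ ψ =>
        simp only [OKT] at ha hb
        simp only [Fw]
        rw [ih m _ ha.1 hb.1, ih m _ ha.2 hb.2]
      | or φ ψ =>
        simp only [OKT] at ha hb
        simp only [Fw]
        rw [ih m _ ha.1 hb.1, ih m _ ha.2 hb.2]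
      | imp φ ψ =>
        simp only [OKT] at ha hb
        simp only [Fw]
        rw [ih m _ ha.1 hb.1, ih m _ ha.2 hb.2]

/-- A sufficient fuel for each sentence. -/
noncomputable def rk (φ : Sentence) : ℕ := (okt_exists θ φ).choose

lemma rk_spec (φ : Sentence) : OKT θ (rk θ φ) φ := (okt_exists θ φ).choose_spec

lemma rk_pos (φ : Sentence) : ∃ k, rk θ φ = k + 1 := by
  cases h : rk θ φ with
  | zero => have := rk_spec θ φ; rw [h] at this; exact absurd this (by simp [OKT])
  | succ k => exact ⟨k, rfl⟩

/-- The forcing relation: worlds are natural numbers, 0 the terminal world. -/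
noncomputable def FF : ℕ → Sentence → Prop
  | 0, φ => F0w θ (rk θ φ) φ
  | n+1, φ => Fw θ (FF n) (rk θ φ) φ

-- Clause lemmas for the forcing relation at world 0.
lemma FF_bot0 : ¬ FF θ 0 Sentence.bot := by
  obtain ⟨k, hk⟩ := rk_pos θ Sentence.bot
  show ¬ F0w θ (rk θ Sentence.bot) Sentence.bot
  rw [hk]; simp [F0w]

lemma FF_A0 (t : Term) : FF θ 0 (Sentence.A t) := by
  obtain ⟨k, hk⟩ := rk_pos θ (Sentence.A t)
  show F0w θ (rk θ (Sentence.A t)) (Sentence.A t)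
  rw [hk]; simp [F0w]

lemma FF_M0 (t : Term) : FF θ 0 (Sentence.M t) := by
  obtain ⟨k, hk⟩ := rk_pos θ (Sentence.M t)
  show F0w θ (rk θ (Sentence.M t)) (Sentence.M t)
  rw [hk]; simp [F0w]

lemma FF_T0 (t : Term) :
    FF θ 0 (Sentence.T t) ↔ (Grounded θ (t.eval θ) ∧ FF θ 0 (t.eval θ)) := by
  obtain ⟨k, hk⟩ := rk_pos θ (Sentence.T t)
  have hs := rk_spec θ (Sentence.T t)
  rw [hk] at hs
  show F0w θ (rk θ (Sentence.T t)) (Sentence.T t) ↔ _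
  rw [hk]
  simp only [F0w]
  by_cases hg : Grounded θ (t.eval θ)
  · simp only [OKT] at hs
    rw [F0w_stab θ k (rk θ (t.eval θ)) _ (hs hg) (rk_spec θ _)]
    exact Iff.rfl
  · simp [hg]

lemma FF_and0 (φ ψ : Sentence) :
    FF θ 0 (Sentence.and φ ψ) ↔ (FF θ 0 φ ∧ FF θ 0 ψ) := by
  obtain ⟨k, hk⟩ := rk_pos θ (Sentence.and φ ψ)
  have hs := rk_spec θ (Sentence.and φ ψ)
  rw [hk] at hs
  simp only [OKT] at hs
  show F0w θ (rk θ (Sentence.and φ ψ)) (Sentence.and φ ψ) ↔ _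
  rw [hk]
  simp only [F0w]
  rw [F0w_stab θ k (rk θ φ) _ hs.1 (rk_spec θ _), F0w_stab θ k (rk θ ψ) _ hs.2 (rk_spec θ _)]
  exact Iff.rfl

lemma FF_or0 (φ ψ : Sentence) :
    FF θ 0 (Sentence.or φ ψ) ↔ (FF θ 0 φ ∨ FF θ 0 ψ) := by
  obtain ⟨k, hk⟩ := rk_pos θ (Sentence.or φ ψ)
  have hs := rk_spec θ (Sentence.or φ ψ)
  rw [hk] at hs
  simp only [OKT] at hs
  show F0w θ (rk θ (Sentence.or φ ψ)) (Sentence.or φ ψ) ↔ _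
  rw [hk]
  simp only [F0w]
  rw [F0w_stab θ k (rk θ φ) _ hs.1 (rk_spec θ _), F0w_stab θ k (rk θ ψ) _ hs.2 (rk_spec θ _)]
  exact Iff.rfl

lemma FF_imp0 (φ ψ : Sentence) :
    FF θ 0 (Sentence.imp φ ψ) ↔ (FF θ 0 φ → FF θ 0 ψ) := by
  obtain ⟨k, hk⟩ := rk_pos θ (Sentence.imp φ ψ)
  have hs := rk_spec θ (Sentence.imp φ ψ)
  rw [hk] at hs
  simp only [OKT] at hs
  show F0w θ (rk θ (Sentence.imp φ ψ)) (Sentence.imp φ ψ) ↔ _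
  rw [hk]
  simp only [F0w]
  rw [F0w_stab θ k (rk θ φ) _ hs.1 (rk_spec θ _), F0w_stab θ k (rk θ ψ) _ hs.2 (rk_spec θ _)]
  exact Iff.rfl

-- Clause lemmas for the forcing relation at successor worlds.
lemma FF_bots (n : ℕ) : ¬ FF θ (n+1) Sentence.bot := by
  obtain ⟨k, hk⟩ := rk_pos θ Sentence.bot
  show ¬ Fw θ (FF θ n) (rk θ Sentence.bot) Sentence.bot
  rw [hk]; simp [Fw]

lemma FF_As (n : ℕ) (t : Term) :
    FF θ (n+1) (Sentence.A t) ↔ (Grounded θ (t.eval θ) ∧ FF θ n (t.eval θ)) := by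
  obtain ⟨k, hk⟩ := rk_pos θ (Sentence.A t)
  show Fw θ (FF θ n) (rk θ (Sentence.A t)) (Sentence.A t) ↔ _
  rw [hk]
  exact Iff.rfl

lemma FF_Ms (n : ℕ) (t : Term) :
    FF θ (n+1) (Sentence.M t) ↔ Grounded θ (t.eval θ) := by
  obtain ⟨k, hk⟩ := rk_pos θ (Sentence.M t)
  show Fw θ (FF θ n) (rk θ (Sentence.M t)) (Sentence.M t) ↔ _
  rw [hk]
  exact Iff.rfl

lemma FF_Ts (n : ℕ) (t : Term) :
    FF θ (n+1) (Sentence.T t) ↔ (Grounded θ (t.eval θ) ∧ FF θ (n+1) (t.eval θ)) := by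
  obtain ⟨k, hk⟩ := rk_pos θ (Sentence.T t)
  have hs := rk_spec θ (Sentence.T t)
  rw [hk] at hs
  simp only [OKT] at hs
  show Fw θ (FF θ n) (rk θ (Sentence.T t)) (Sentence.T t) ↔ _
  rw [hk]
  simp only [Fw]
  by_cases hg : Grounded θ (t.eval θ)
  · rw [Fw_stab θ (FF θ n) k (rk θ (t.eval θ)) _ (hs hg) (rk_spec θ _)]
    exact Iff.rfl
  · simp [hg]

lemma FF_ands (n : ℕ) (φ ψ : Sentence) :
    FF θ (n+1) (Sentence.and φ ψ) ↔ (FF θ (n+1) φ ∧ FF θ (n+1) ψ) := by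
  obtain ⟨k, hk⟩ := rk_pos θ (Sentence.and φ ψ)
  have hs := rk_spec θ (Sentence.and φ ψ)
  rw [hk] at hs
  simp only [OKT] at hs
  show Fw θ (FF θ n) (rk θ (Sentence.and φ ψ)) (Sentence.and φ ψ) ↔ _
  rw [hk]
  simp only [Fw]
  rw [Fw_stab θ (FF θ n) k (rk θ φ) _ hs.1 (rk_spec θ _),
    Fw_stab θ (FF θ n) k (rk θ ψ) _ hs.2 (rk_spec θ _)]
  exact Iff.rfl

lemma FF_ors (n : ℕ) (φ ψ : Sentence) :
    FF θ (n+1) (Sentence.or φ ψ) ↔ (FF θ (n+1) φ ∨ FF θ (n+1) ψ) := by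
  obtain ⟨k, hk⟩ := rk_pos θ (Sentence.or φ ψ)
  have hs := rk_spec θ (Sentence.or φ ψ)
  rw [hk] at hs
  simp only [OKT] at hs
  show Fw θ (FF θ n) (rk θ (Sentence.or φ ψ)) (Sentence.or φ ψ) ↔ _
  rw [hk]
  simp only [Fw]
  rw [Fw_stab θ (FF θ n) k (rk θ φ) _ hs.1 (rk_spec θ _),
    Fw_stab θ (FF θ n) k (rk θ ψ) _ hs.2 (rk_spec θ _)]
  exact Iff.rfl

lemma FF_imps (n : ℕ) (φ ψ : Sentence) :
    FF θ (n+1) (Sentence.imp φ ψ) ↔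
      (FF θ n (Sentence.imp φ ψ) ∧ (FF θ (n+1) φ → FF θ (n+1) ψ)) := by
  obtain ⟨k, hk⟩ := rk_pos θ (Sentence.imp φ ψ)
  have hs := rk_spec θ (Sentence.imp φ ψ)
  rw [hk] at hs
  simp only [OKT] at hs
  show Fw θ (FF θ n) (rk θ (Sentence.imp φ ψ)) (Sentence.imp φ ψ) ↔ _
  rw [hk]
  simp only [Fw]
  rw [Fw_stab θ (FF θ n) k (rk θ φ) _ hs.1 (rk_spec θ _),
    Fw_stab θ (FF θ n) k (rk θ ψ) _ hs.2 (rk_spec θ _)]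
  exact Iff.rfl

lemma FF_bot (n : ℕ) : ¬ FF θ n Sentence.bot := by
  cases n with
  | zero => exact FF_bot0 θ
  | succ n => exact FF_bots θ n

lemma FF_and (n : ℕ) (φ ψ : Sentence) :
    FF θ n (Sentence.and φ ψ) ↔ (FF θ n φ ∧ FF θ n ψ) := by
  cases n with
  | zero => exact FF_and0 θ φ ψ
  | succ n => exact FF_ands θ n φ ψ

lemma FF_or (n : ℕ) (φ ψ : Sentence) :
    FF θ n (Sentence.or φ ψ) ↔ (FF θ n φ ∨ FF θ n ψ) := by
  cases n with
  | zero => exact FF_or0 θ φ ψ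
  | succ n => exact FF_ors θ n φ ψ

lemma FF_T (n : ℕ) (t : Term) :
    FF θ n (Sentence.T t) ↔ (Grounded θ (t.eval θ) ∧ FF θ n (t.eval θ)) := by
  cases n with
  | zero => exact FF_T0 θ t
  | succ n => exact FF_Ts θ n t

/-- Persistence: forcing propagates to smaller worlds. -/
lemma persist : ∀ n φ, FF θ (n+1) φ → FF θ n φ := by
  intro n
  induction n with
  | zero =>
    suffices h : ∀ m φ, OKT θ m φ → FF θ 1 φ → FF θ 0 φ by
      intro φ; exact h (rk θ φ) φ (rk_spec θ φ)
    intro m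
    induction m with
    | zero => intro φ hok; exact absurd hok (by simp [OKT])
    | succ k ih =>
      intro φ hok h
      cases φ with
      | bot => exact absurd h (FF_bots θ 0)
      | A t => exact FF_A0 θ t
      | M t => exact FF_M0 θ t
      | T t =>
        simp only [OKT] at hok
        obtain ⟨hg, h1⟩ := (FF_Ts θ 0 t).1 h
        exact (FF_T0 θ t).2 ⟨hg, ih _ (hok hg) h1⟩
      | and φ ψ =>
        simp only [OKT] at hok
        obtain ⟨h1, h2⟩ := (FF_ands θ 0 φ ψ).1 h
        exact (FF_and0 θ φ ψ).2 ⟨ih _ hok.1 h1, ih _ hok.2 h2⟩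
      | or φ ψ =>
        simp only [OKT] at hok
        rcases (FF_ors θ 0 φ ψ).1 h with h1 | h1
        · exact (FF_or0 θ φ ψ).2 (Or.inl (ih _ hok.1 h1))
        · exact (FF_or0 θ φ ψ).2 (Or.inr (ih _ hok.2 h1))
      | imp φ ψ => exact ((FF_imps θ 0 φ ψ).1 h).1
  | succ n IH =>
    suffices h : ∀ m φ, OKT θ m φ → FF θ (n+2) φ → FF θ (n+1) φ by
      intro φ; exact h (rk θ φ) φ (rk_spec θ φ)
    intro m
    induction m with
    | zero => intro φ hok; exact absurd hok (by simp [OKT])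
    | succ k ih =>
      intro φ hok h
      cases φ with
      | bot => exact absurd h (FF_bots θ (n+1))
      | A t =>
        obtain ⟨hg, h1⟩ := (FF_As θ (n+1) t).1 h
        exact (FF_As θ n t).2 ⟨hg, IH _ h1⟩
      | M t => exact (FF_Ms θ n t).2 ((FF_Ms θ (n+1) t).1 h)
      | T t =>
        simp only [OKT] at hok
        obtain ⟨hg, h1⟩ := (FF_Ts θ (n+1) t).1 h
        exact (FF_Ts θ n t).2 ⟨hg, ih _ (hok hg) h1⟩
      | and φ ψ =>
        simp only [OKT] at hok
        obtain ⟨h1, h2⟩ := (FF_ands θ (n+1) φ ψ).1 h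
        exact (FF_ands θ n φ ψ).2 ⟨ih _ hok.1 h1, ih _ hok.2 h2⟩
      | or φ ψ =>
        simp only [OKT] at hok
        rcases (FF_ors θ (n+1) φ ψ).1 h with h1 | h1
        · exact (FF_ors θ n φ ψ).2 (Or.inl (ih _ hok.1 h1))
        · exact (FF_ors θ n φ ψ).2 (Or.inr (ih _ hok.2 h1))
      | imp φ ψ => exact ((FF_imps θ (n+1) φ ψ).1 h).1

lemma persist_le {m n : ℕ} (h : m ≤ n) {φ : Sentence} (hf : FF θ n φ) : FF θ m φ := by
  induction n with
  | zero => exact Nat.le_zero.1 h ▸ hf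
  | succ k ih =>
    rcases Nat.lt_or_ge m (k+1) with hlt | hge
    · exact ih (Nat.lt_succ_iff.1 hlt) (persist θ k φ hf)
    · exact (Nat.le_antisymm h hge) ▸ hf

/-- Modus ponens at a world. -/
lemma mpAt {n : ℕ} {φ ψ : Sentence} (h : FF θ n (Sentence.imp φ ψ)) (h1 : FF θ n φ) :
    FF θ n ψ := by
  cases n with
  | zero => exact (FF_imp0 θ φ ψ).1 h h1
  | succ n => exact ((FF_imps θ n φ ψ).1 h).2 h1

/-- Implication introduction at a world. -/
lemma introImp : ∀ (n : ℕ) {φ ψ : Sentence},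
    (∀ m, m ≤ n → FF θ m φ → FF θ m ψ) → FF θ n (Sentence.imp φ ψ) := by
  intro n
  induction n with
  | zero => intro φ ψ h; exact (FF_imp0 θ φ ψ).2 (h 0 le_rfl)
  | succ k ih =>
    intro φ ψ h
    exact (FF_imps θ k φ ψ).2
      ⟨ih (fun m hm => h m (Nat.le_succ_of_le hm)), h (k+1) le_rfl⟩

-- Kripke validity of the intuitionistic Hilbert axioms.
lemma val_imp1 (n : ℕ) (α β : Sentence) :
    FF θ n (Sentence.imp α (Sentence.imp β α)) := by
  refine introImp θ n (fun m _ h => ?_)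
  exact introImp θ m (fun j hj _ => persist_le θ hj h)

lemma val_imp2 (n : ℕ) (α β γ : Sentence) :
    FF θ n (Sentence.imp (Sentence.imp α (Sentence.imp β γ))
      (Sentence.imp (Sentence.imp α β) (Sentence.imp α γ))) := by
  refine introImp θ n (fun m _ h1 => ?_)
  refine introImp θ m (fun k hk h2 => ?_)
  refine introImp θ k (fun j hj h3 => ?_)
  have h1' : FF θ j (Sentence.imp α (Sentence.imp β γ)) :=
    persist_le θ (le_trans hj hk) h1
  have h2' : FF θ j (Sentence.imp α β) := persist_le θ hj h2
  exact mpAt θ (mpAt θ h1' h3) (mpAt θ h2' h3)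

lemma val_andE1 (n : ℕ) (α β : Sentence) :
    FF θ n (Sentence.imp (Sentence.and α β) α) :=
  introImp θ n (fun m _ h => ((FF_and θ m α β).1 h).1)

lemma val_andE2 (n : ℕ) (α β : Sentence) :
    FF θ n (Sentence.imp (Sentence.and α β) β) :=
  introImp θ n (fun m _ h => ((FF_and θ m α β).1 h).2)

lemma val_andI (n : ℕ) (α β : Sentence) :
    FF θ n (Sentence.imp α (Sentence.imp β (Sentence.and α β))) := by
  refine introImp θ n (fun m _ h1 => ?_)
  refine introImp θ m (fun k hk h2 => ?_)
  exact (FF_and θ k α β).2 ⟨persist_le θ hk h1, h2⟩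

lemma val_orI1 (n : ℕ) (α β : Sentence) :
    FF θ n (Sentence.imp α (Sentence.or α β)) :=
  introImp θ n (fun m _ h => (FF_or θ m α β).2 (Or.inl h))

lemma val_orI2 (n : ℕ) (α β : Sentence) :
    FF θ n (Sentence.imp β (Sentence.or α β)) :=
  introImp θ n (fun m _ h => (FF_or θ m α β).2 (Or.inr h))

lemma val_orE (n : ℕ) (α β γ : Sentence) :
    FF θ n (Sentence.imp (Sentence.imp α γ)
      (Sentence.imp (Sentence.imp β γ) (Sentence.imp (Sentence.or α β) γ))) := by
  refine introImp θ n (fun m _ h1 => ?_)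
  refine introImp θ m (fun k hk h2 => ?_)
  refine introImp θ k (fun j hj h3 => ?_)
  rcases (FF_or θ j α β).1 h3 with h | h
  · exact mpAt θ (persist_le θ (le_trans hj hk) h1) h
  · exact mpAt θ (persist_le θ hj h2) h

lemma val_exfalso (n : ℕ) (α : Sentence) :
    FF θ n (Sentence.imp Sentence.bot α) :=
  introImp θ n (fun m _ h => absurd h (FF_bot θ m))

-- Inversion lemmas for groundedness.
lemma ground_and_inv {φ ψ : Sentence} (h : Grounded θ (Sentence.and φ ψ)) :
    Grounded θ φ ∧ Grounded θ ψ := by cases h; exact ⟨‹_›, ‹_›⟩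

lemma ground_or_inv {φ ψ : Sentence} (h : Grounded θ (Sentence.or φ ψ)) :
    Grounded θ φ ∧ Grounded θ ψ := by cases h; exact ⟨‹_›, ‹_›⟩

lemma ground_imp_inv {φ ψ : Sentence} (h : Grounded θ (Sentence.imp φ ψ)) :
    Grounded θ φ ∧ Grounded θ ψ := by cases h; exact ⟨‹_›, ‹_›⟩

@[simp] lemma eval_bot : Term.eval θ Term.bot = Sentence.bot := rfl
@[simp] lemma eval_and (s t : Term) :
    Term.eval θ (Term.and s t) = Sentence.and (s.eval θ) (t.eval θ) := rfl
@[simp] lemma eval_or (s t : Term) :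
    Term.eval θ (Term.or s t) = Sentence.or (s.eval θ) (t.eval θ) := rfl
@[simp] lemma eval_imp (s t : Term) :
    Term.eval θ (Term.imp s t) = Sentence.imp (s.eval θ) (t.eval θ) := rfl
@[simp] lemma eval_A (t : Term) : Term.eval θ (Term.A t) = Sentence.A t := rfl
@[simp] lemma eval_T (t : Term) : Term.eval θ (Term.T t) = Sentence.T t := rfl
@[simp] lemma eval_M (t : Term) : Term.eval θ (Term.M t) = Sentence.M t := rfl
@[simp] lemma eval_neg (t : Term) :
    Term.eval θ (Term.neg t) = Sentence.imp (t.eval θ) Sentence.bot := rfl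
@[simp] lemma eval_iff (s t : Term) :
    Term.eval θ (Term.iff s t) =
      Sentence.and (Sentence.imp (s.eval θ) (t.eval θ))
        (Sentence.imp (t.eval θ) (s.eval θ)) := rfl

/-- Soundness: every theorem is forced at every world. -/
lemma sound {φ : Sentence} (h : Thm θ φ) : ∀ n, FF θ n φ := by
  induction h with
  | @logical s t u a hax =>
    intro n
    refine introImp θ n (fun m _ hyp => ?_)
    cases m with
    | zero => exact FF_A0 θ a
    | succ k =>
      have h1 := (FF_and θ (k+1) _ _).1 hyp
      have h2 := (FF_and θ (k+1) _ _).1 h1.1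
      have Gs := (FF_Ms θ k s).1 h2.1
      have Gt := (FF_Ms θ k t).1 h2.2
      have Gu := (FF_Ms θ k u).1 h1.2
      refine (FF_As θ k a).2 ⟨?_, ?_⟩
      · cases hax with
        | imp1 => exact Grounded.imp Gs (Grounded.imp Gt Gs)
        | imp2 =>
          exact Grounded.imp (Grounded.imp Gs (Grounded.imp Gt Gu))
            (Grounded.imp (Grounded.imp Gs Gt) (Grounded.imp Gs Gu))
        | andE1 => exact Grounded.imp (Grounded.and Gs Gt) Gs
        | andE2 => exact Grounded.imp (Grounded.and Gs Gt) Gt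
        | andI => exact Grounded.imp Gs (Grounded.imp Gt (Grounded.and Gs Gt))
        | orI1 => exact Grounded.imp Gs (Grounded.or Gs Gt)
        | orI2 => exact Grounded.imp Gt (Grounded.or Gs Gt)
        | orE =>
          exact Grounded.imp (Grounded.imp Gs Gu)
            (Grounded.imp (Grounded.imp Gt Gu)
              (Grounded.imp (Grounded.or Gs Gt) Gu))
        | exfalso => exact Grounded.imp Grounded.bot Gs
      · cases hax with
        | imp1 => exact val_imp1 θ k _ _
        | imp2 => exact val_imp2 θ k _ _ _
        | andE1 => exact val_andE1 θ k _ _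
        | andE2 => exact val_andE2 θ k _ _
        | andI => exact val_andI θ k _ _
        | orI1 => exact val_orI1 θ k _ _
        | orI2 => exact val_orI2 θ k _ _
        | orE => exact val_orE θ k _ _ _
        | exfalso => exact val_exfalso θ k _
  | @ax1 t hg =>
    intro n
    cases n with
    | zero => exact FF_M0 θ t
    | succ k => exact (FF_Ms θ k t).2 hg
  | ax2and s t =>
    intro n
    refine (FF_and θ n _ _).2 ⟨?_, ?_⟩
    · refine introImp θ n (fun m _ hyp => ?_)
      cases m with
      | zero => exact FF_M0 θ _
      | succ k =>
        have h1 := (FF_and θ (k+1) _ _).1 hyp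
        exact (FF_Ms θ k _).2
          (Grounded.and ((FF_Ms θ k s).1 h1.1) ((FF_Ms θ k t).1 h1.2))
    · refine introImp θ n (fun m _ hyp => ?_)
      cases m with
      | zero => exact (FF_and0 θ _ _).2 ⟨FF_M0 θ s, FF_M0 θ t⟩
      | succ k =>
        have hg := ground_and_inv θ ((FF_Ms θ k _).1 hyp)
        exact (FF_ands θ k _ _).2 ⟨(FF_Ms θ k s).2 hg.1, (FF_Ms θ k t).2 hg.2⟩
  | ax2or s t =>
    intro n
    refine (FF_and θ n _ _).2 ⟨?_, ?_⟩
    · refine introImp θ n (fun m _ hyp => ?_)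
      cases m with
      | zero => exact FF_M0 θ _
      | succ k =>
        have h1 := (FF_and θ (k+1) _ _).1 hyp
        exact (FF_Ms θ k _).2
          (Grounded.or ((FF_Ms θ k s).1 h1.1) ((FF_Ms θ k t).1 h1.2))
    · refine introImp θ n (fun m _ hyp => ?_)
      cases m with
      | zero => exact (FF_and0 θ _ _).2 ⟨FF_M0 θ s, FF_M0 θ t⟩
      | succ k =>
        have hg := ground_or_inv θ ((FF_Ms θ k _).1 hyp)
        exact (FF_ands θ k _ _).2 ⟨(FF_Ms θ k s).2 hg.1, (FF_Ms θ k t).2 hg.2⟩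
  | ax2imp s t =>
    intro n
    refine (FF_and θ n _ _).2 ⟨?_, ?_⟩
    · refine introImp θ n (fun m _ hyp => ?_)
      cases m with
      | zero => exact FF_M0 θ _
      | succ k =>
        have h1 := (FF_and θ (k+1) _ _).1 hyp
        exact (FF_Ms θ k _).2
          (Grounded.imp ((FF_Ms θ k s).1 h1.1) ((FF_Ms θ k t).1 h1.2))
    · refine introImp θ n (fun m _ hyp => ?_)
      cases m with
      | zero => exact (FF_and0 θ _ _).2 ⟨FF_M0 θ s, FF_M0 θ t⟩
      | succ k =>
        have hg := ground_imp_inv θ ((FF_Ms θ k _).1 hyp)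
        exact (FF_ands θ k _ _).2 ⟨(FF_Ms θ k s).2 hg.1, (FF_Ms θ k t).2 hg.2⟩
  | ax3 t =>
    intro n
    refine introImp θ n (fun m _ hyp => ?_)
    cases m with
    | zero => exact FF_M0 θ t
    | succ k => exact (FF_Ms θ k t).2 ((FF_As θ k t).1 hyp).1
  | ax4 s t =>
    intro n
    refine introImp θ n (fun m _ hyp => ?_)
    cases m with
    | zero => exact FF_A0 θ _
    | succ k =>
      have h1 := (FF_and θ (k+1) _ _).1 hyp
      obtain ⟨Gs, hs⟩ := (FF_As θ k s).1 h1.1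
      obtain ⟨Gt, ht⟩ := (FF_As θ k t).1 h1.2
      exact (FF_As θ k _).2 ⟨Grounded.and Gs Gt, (FF_and θ k _ _).2 ⟨hs, ht⟩⟩
  | ax5 s t =>
    intro n
    refine introImp θ n (fun m _ hyp => ?_)
    cases m with
    | zero => exact FF_A0 θ _
    | succ k =>
      have h1 := (FF_and θ (k+1) _ _).1 hyp
      obtain ⟨Gs, hs⟩ := (FF_As θ k s).1 h1.1
      obtain ⟨Gst, hst⟩ := (FF_As θ k _).1 h1.2
      have Gt := (ground_imp_inv θ Gst).2
      exact (FF_As θ k t).2 ⟨Gt, mpAt θ hst hs⟩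
  | ax6 t =>
    intro n
    refine introImp θ n (fun m _ hyp => ?_)
    cases m with
    | zero => exact FF_A0 θ _
    | succ k =>
      have Gt := (FF_Ms θ k t).1 hyp
      refine (FF_As θ k _).2 ⟨Grounded.imp Gt (Grounded.A t), ?_⟩
      refine introImp θ k (fun j _ hj => ?_)
      cases j with
      | zero => exact FF_A0 θ t
      | succ i => exact (FF_As θ i t).2 ⟨Gt, persist θ i _ hj⟩
  | ax7 t =>
    intro n
    refine introImp θ n (fun m _ hyp => ?_)
    cases m with
    | zero => exact FF_A0 θ _
    | succ k =>
      have Gt := (FF_Ms θ k t).1 hyp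
      refine (FF_As θ k _).2
        ⟨Grounded.and (Grounded.imp Gt (Grounded.T Gt)) (Grounded.imp (Grounded.T Gt) Gt), ?_⟩
      refine (FF_and θ k _ _).2 ⟨?_, ?_⟩
      · exact introImp θ k (fun j _ hj => (FF_T θ j t).2 ⟨Gt, hj⟩)
      · exact introImp θ k (fun j _ hj => ((FF_T θ j t).1 hj).2)
  | ax8 t =>
    intro n
    refine introImp θ n (fun m _ hyp => ?_)
    have h0 : FF θ 0 (Sentence.imp (Sentence.M t) Sentence.bot) :=
      persist_le θ (Nat.zero_le m) hyp
    exact absurd (mpAt θ h0 (FF_M0 θ t)) (FF_bot θ 0)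
  | @ax9 t t' he =>
    intro n
    refine introImp θ n (fun m _ hyp => ?_)
    cases m with
    | zero => exact FF_A0 θ _
    | succ k =>
      have Gt := (FF_Ms θ k t).1 hyp
      refine (FF_As θ k _).2 ⟨?_, ?_⟩
      · show Grounded θ (Sentence.and
          (Sentence.imp (t.eval θ) (t'.eval θ)) (Sentence.imp (t'.eval θ) (t.eval θ)))
        rw [← he]
        exact Grounded.and (Grounded.imp Gt Gt) (Grounded.imp Gt Gt)
      · show FF θ k (Sentence.and
          (Sentence.imp (t.eval θ) (t'.eval θ)) (Sentence.imp (t'.eval θ) (t.eval θ)))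
        rw [← he]
        exact (FF_and θ k _ _).2
          ⟨introImp θ k (fun j _ hj => hj), introImp θ k (fun j _ hj => hj)⟩
  | conj h1 h2 ih1 ih2 => exact fun n => (FF_and θ n _ _).2 ⟨ih1 n, ih2 n⟩
  | mp h1 h2 ih1 ih2 => exact fun n => mpAt θ (ih2 n) (ih1 n)
  | @release t h ih => exact fun n => ((FF_As θ n t).1 (ih (n+1))).2

theorem consistency : ¬ Thm θ Sentence.bot :=
  fun h => FF_bot θ 0 (sound θ h 0)

end Model

theorem atm_consistent (θ : ℕ → Sentence)
    (h1 : θ 1 = liar1) (h2 : θ 2 = liar2) :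
    ¬ Thm θ Sentence.bot :=
  consistency θ

end ATM
end

section
/- Every theorem of the formal system ATM is a grounded sentence. -/
namespace ATM

def Force (θ : ℕ → Sentence) : ℕ → ℕ → Sentence → Prop
  | _, _, Sentence.bot => False
  | n, _, Sentence.M t => n = 0 ∨ Grounded θ (t.eval θ)
  | n, _, Sentence.A t => n = 0 ∨ (Grounded θ (t.eval θ) ∧
      ∃ e₀, ∀ e, e₀ ≤ e → ∀ m, m < n → Force θ m e (t.eval θ))
  | _, 0, Sentence.T _ => False
  | n, d+1, Sentence.T t => Grounded θ (t.eval θ) ∧ Force θ n d (t.eval θ)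
  | n, d, Sentence.and φ ψ => Force θ n d φ ∧ Force θ n d ψ
  | n, d, Sentence.or φ ψ => Force θ n d φ ∨ Force θ n d ψ
  | n, d, Sentence.imp φ ψ => ∀ m, m ≤ n → Force θ m d φ → Force θ m d ψ
termination_by n d φ => (n, d, sizeOf φ)
decreasing_by all_goals (simp_wf; simp [Prod.lex_def] <;> omega)

@[simp] lemma force_bot {θ n d} : Force θ n d Sentence.bot ↔ False := by
  rw [Force]

@[simp] lemma force_M {θ n d t} :
    Force θ n d (Sentence.M t) ↔ (n = 0 ∨ Grounded θ (t.eval θ)) := by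
  rw [Force]

@[simp] lemma force_A {θ n d t} :
    Force θ n d (Sentence.A t) ↔ (n = 0 ∨ (Grounded θ (t.eval θ) ∧
      ∃ e₀, ∀ e, e₀ ≤ e → ∀ m, m < n → Force θ m e (t.eval θ))) := by
  rw [Force]

@[simp] lemma force_T_zero {θ n t} : Force θ n 0 (Sentence.T t) ↔ False := by
  rw [Force]

@[simp] lemma force_T_succ {θ n d t} :
    Force θ n (d+1) (Sentence.T t) ↔
      (Grounded θ (t.eval θ) ∧ Force θ n d (t.eval θ)) := by
  rw [Force]

@[simp] lemma force_and {θ n d φ ψ} :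
    Force θ n d (Sentence.and φ ψ) ↔ (Force θ n d φ ∧ Force θ n d ψ) := by
  rw [Force]

@[simp] lemma force_or {θ n d φ ψ} :
    Force θ n d (Sentence.or φ ψ) ↔ (Force θ n d φ ∨ Force θ n d ψ) := by
  rw [Force]

@[simp] lemma force_imp {θ n d φ ψ} :
    Force θ n d (Sentence.imp φ ψ) ↔
      (∀ m, m ≤ n → Force θ m d φ → Force θ m d ψ) := by
  rw [Force]

theorem force_mono {θ : ℕ → Sentence} :
    ∀ (d : ℕ) (φ : Sentence) {n m : ℕ}, m ≤ n → Force θ n d φ → Force θ m d φ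
  | _, Sentence.bot, _, _, _, hf => (force_bot.mp hf).elim
  | _, Sentence.M _, _, _, h, hf => force_M.mpr (by
      rcases force_M.mp hf with h0 | hg
      · left; omega
      · right; exact hg)
  | _, Sentence.A _, _, _, h, hf => force_A.mpr (by
      rcases force_A.mp hf with h0 | ⟨hg, e0, H⟩
      · left; omega
      · right; exact ⟨hg, e0, fun e he k hk => H e he k (by omega)⟩)
  | 0, Sentence.T _, _, _, _, hf => (force_T_zero.mp hf).elim
  | (d+1), Sentence.T t, _, _, h, hf => by
      rcases force_T_succ.mp hf with ⟨hg, hf'⟩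
      exact force_T_succ.mpr ⟨hg, force_mono d _ h hf'⟩
  | d, Sentence.and φ ψ, _, _, h, hf => by
      rcases force_and.mp hf with ⟨h1, h2⟩
      exact force_and.mpr ⟨force_mono d φ h h1, force_mono d ψ h h2⟩
  | d, Sentence.or φ ψ, _, _, h, hf => by
      rcases force_or.mp hf with h1 | h2
      · exact force_or.mpr (Or.inl (force_mono d φ h h1))
      · exact force_or.mpr (Or.inr (force_mono d ψ h h2))
  | d, Sentence.imp φ ψ, _, _, h, hf =>
      force_imp.mpr (fun k hk => force_imp.mp hf k (by omega))
termination_by d φ => (d, sizeOf φ)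
decreasing_by all_goals (simp_wf; simp [Prod.lex_def] <;> omega)

/-- Groundedness inversion lemmas. -/
lemma gr_and {θ φ ψ} (h : Grounded θ (Sentence.and φ ψ)) :
    Grounded θ φ ∧ Grounded θ ψ := by cases h with | and a b => exact ⟨a, b⟩

lemma gr_or {θ φ ψ} (h : Grounded θ (Sentence.or φ ψ)) :
    Grounded θ φ ∧ Grounded θ ψ := by cases h with | or a b => exact ⟨a, b⟩

lemma gr_imp {θ φ ψ} (h : Grounded θ (Sentence.imp φ ψ)) :
    Grounded θ φ ∧ Grounded θ ψ := by cases h with | imp a b => exact ⟨a, b⟩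

lemma gr_T {θ t} (h : Grounded θ (Sentence.T t)) : Grounded θ (t.eval θ) := by
  cases h with | T a => exact a

/-- Stability of forcing in the `T`-unfolding fuel from level `d` on. -/
def Stable (θ : ℕ → Sentence) (d : ℕ) (φ : Sentence) : Prop :=
  ∀ e, d ≤ e → ∀ n, Force θ n e φ ↔ Force θ n d φ

lemma stable_le {θ d e φ} (h : Stable θ d φ) (hde : d ≤ e) : Stable θ e φ :=
  fun e' he' n => (h e' (le_trans hde he') n).trans (h e hde n).symm

lemma stable_bot {θ} : Stable θ 0 Sentence.bot := by
  intro e _ n; simp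

lemma stable_M {θ t} : Stable θ 0 (Sentence.M t) := by
  intro e _ n; simp

lemma stable_A {θ t} : Stable θ 0 (Sentence.A t) := by
  intro e _ n; simp

lemma stable_T_not {θ t} (h : ¬ Grounded θ (t.eval θ)) :
    Stable θ 0 (Sentence.T t) := by
  intro e _ n
  cases e with
  | zero => rfl
  | succ e => simp [h]

lemma stable_T {θ t d} (hg : Grounded θ (t.eval θ)) (h : Stable θ d (t.eval θ)) :
    Stable θ (d+1) (Sentence.T t) := by
  intro e he n
  cases e with
  | zero => omega
  | succ e =>
    simp only [force_T_succ]
    constructor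
    · rintro ⟨_, hf⟩; exact ⟨hg, (h d le_rfl n).mpr ((h e (by omega) n).mp hf)⟩
    · rintro ⟨_, hf⟩; exact ⟨hg, (h e (by omega) n).mpr ((h d le_rfl n).mp hf)⟩

lemma stable_and {θ d₁ d₂ φ ψ} (h1 : Stable θ d₁ φ) (h2 : Stable θ d₂ ψ) :
    Stable θ (max d₁ d₂) (Sentence.and φ ψ) := by
  have h1 := stable_le h1 (le_max_left d₁ d₂)
  have h2 := stable_le h2 (le_max_right d₁ d₂)
  intro e he n
  simp only [force_and]
  rw [h1 e he n, h2 e he n]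

lemma stable_or {θ d₁ d₂ φ ψ} (h1 : Stable θ d₁ φ) (h2 : Stable θ d₂ ψ) :
    Stable θ (max d₁ d₂) (Sentence.or φ ψ) := by
  have h1 := stable_le h1 (le_max_left d₁ d₂)
  have h2 := stable_le h2 (le_max_right d₁ d₂)
  intro e he n
  simp only [force_or]
  rw [h1 e he n, h2 e he n]

lemma stable_imp {θ d₁ d₂ φ ψ} (h1 : Stable θ d₁ φ) (h2 : Stable θ d₂ ψ) :
    Stable θ (max d₁ d₂) (Sentence.imp φ ψ) := by
  have h1 := stable_le h1 (le_max_left d₁ d₂)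
  have h2 := stable_le h2 (le_max_right d₁ d₂)
  intro e he n
  simp only [force_imp]
  constructor
  · intro H m hm hf
    exact (h2 e he m).mp (H m hm ((h1 e he m).mpr hf))
  · intro H m hm hf
    exact (h2 e he m).mpr (H m hm ((h1 e he m).mp hf))

/-- Every grounded sentence is eventually stable. -/
lemma grounded_stable {θ φ} (h : Grounded θ φ) : ∃ d, Stable θ d φ := by
  induction h with
  | bot => exact ⟨0, stable_bot⟩
  | A t => exact ⟨0, stable_A⟩
  | M t => exact ⟨0, stable_M⟩
  | and _ _ ih1 ih2 =>
    obtain ⟨d₁, h1⟩ := ih1; obtain ⟨d₂, h2⟩ := ih2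
    exact ⟨max d₁ d₂, stable_and h1 h2⟩
  | or _ _ ih1 ih2 =>
    obtain ⟨d₁, h1⟩ := ih1; obtain ⟨d₂, h2⟩ := ih2
    exact ⟨max d₁ d₂, stable_or h1 h2⟩
  | imp _ _ ih1 ih2 =>
    obtain ⟨d₁, h1⟩ := ih1; obtain ⟨d₂, h2⟩ := ih2
    exact ⟨max d₁ d₂, stable_imp h1 h2⟩
  | T hg ih =>
    obtain ⟨d, hd⟩ := ih
    exact ⟨d + 1, stable_T hg hd⟩

lemma hilbert_grounded {θ s t u a} (h : HilbertAxT s t u a)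
    (hs : Grounded θ (s.eval θ)) (ht : Grounded θ (t.eval θ))
    (hu : Grounded θ (u.eval θ)) : Grounded θ (a.eval θ) := by
  cases h <;> simp only [Term.eval] <;>
    first
    | exact Grounded.imp hs (Grounded.imp ht hs)
    | exact Grounded.imp (Grounded.imp hs (Grounded.imp ht hu))
        (Grounded.imp (Grounded.imp hs ht) (Grounded.imp hs hu))
    | exact Grounded.imp (Grounded.and hs ht) hs
    | exact Grounded.imp (Grounded.and hs ht) ht
    | exact Grounded.imp hs (Grounded.imp ht (Grounded.and hs ht))
    | exact Grounded.imp hs (Grounded.or hs ht)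
    | exact Grounded.imp ht (Grounded.or hs ht)
    | exact Grounded.imp (Grounded.imp hs hu)
        (Grounded.imp (Grounded.imp ht hu) (Grounded.imp (Grounded.or hs ht) hu))
    | exact Grounded.imp Grounded.bot hs

lemma hilbert_force {θ s t u a} (h : HilbertAxT s t u a) (n d : ℕ) :
    Force θ n d (a.eval θ) := by
  cases h with
  | imp1 =>
    simp only [Term.eval, force_imp]
    intro m _ hs k hk _
    exact force_mono d _ hk hs
  | imp2 =>
    simp only [Term.eval, force_imp]
    intro m _ h1 k hk h2 j hj hs
    exact h1 j (le_trans hj hk) hs j le_rfl (h2 j hj hs)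
  | andE1 =>
    simp only [Term.eval, force_imp, force_and]
    intro m _ h
    exact h.1
  | andE2 =>
    simp only [Term.eval, force_imp, force_and]
    intro m _ h
    exact h.2
  | andI =>
    simp only [Term.eval, force_imp, force_and]
    intro m _ hs k hk ht
    exact ⟨force_mono d _ hk hs, ht⟩
  | orI1 =>
    simp only [Term.eval, force_imp, force_or]
    intro m _ hs
    exact Or.inl hs
  | orI2 =>
    simp only [Term.eval, force_imp, force_or]
    intro m _ ht
    exact Or.inr ht
  | orE =>
    simp only [Term.eval, force_imp, force_or]
    intro m _ h1 k hk h2 j hj hd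
    rcases hd with hs | ht
    · exact h1 j (le_trans hj hk) hs
    · exact h2 j hj ht
  | exfalso =>
    simp only [Term.eval, force_imp, force_bot]
    intro m _ h
    exact h.elim

theorem thm_inv {θ : ℕ → Sentence} {φ : Sentence} (h : Thm θ φ) :
    Grounded θ φ ∧ ∀ n, ∃ d₀, ∀ d, d₀ ≤ d → Force θ n d φ := by
  induction h with
  | logical hax =>
    refine ⟨Grounded.imp (Grounded.and (Grounded.and (Grounded.M _) (Grounded.M _))
      (Grounded.M _)) (Grounded.A _), fun n => ⟨0, fun d _ => ?_⟩⟩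
    rw [force_imp]
    intro m _ hyp
    rcases Nat.eq_zero_or_pos m with rfl | hm
    · exact force_A.mpr (Or.inl rfl)
    · simp only [force_and, force_M] at hyp
      obtain ⟨⟨hs, ht⟩, hu⟩ := hyp
      have hs := hs.resolve_left (by omega)
      have ht := ht.resolve_left (by omega)
      have hu := hu.resolve_left (by omega)
      exact force_A.mpr (Or.inr ⟨hilbert_grounded hax hs ht hu, 0,
        fun e _ k _ => hilbert_force hax k e⟩)
  | ax1 hg =>
    exact ⟨Grounded.M _, fun n => ⟨0, fun d _ => force_M.mpr (Or.inr hg)⟩⟩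
  | ax2and s t =>
    refine ⟨Grounded.and
      (Grounded.imp (Grounded.and (Grounded.M _) (Grounded.M _)) (Grounded.M _))
      (Grounded.imp (Grounded.M _) (Grounded.and (Grounded.M _) (Grounded.M _))),
      fun n => ⟨0, fun d _ => ?_⟩⟩
    simp only [Sentence.iff, force_and, force_imp, force_M, Term.eval]
    constructor
    · intro m _ hyp
      rcases Nat.eq_zero_or_pos m with rfl | hm
      · exact Or.inl rfl
      · exact Or.inr (Grounded.and (hyp.1.resolve_left (by omega))
          (hyp.2.resolve_left (by omega)))
    · intro m _ hyp
      rcases Nat.eq_zero_or_pos m with rfl | hm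
      · exact ⟨Or.inl rfl, Or.inl rfl⟩
      · have hg := hyp.resolve_left (by omega)
        exact ⟨Or.inr (gr_and hg).1, Or.inr (gr_and hg).2⟩
  | ax2or s t =>
    refine ⟨Grounded.and
      (Grounded.imp (Grounded.and (Grounded.M _) (Grounded.M _)) (Grounded.M _))
      (Grounded.imp (Grounded.M _) (Grounded.and (Grounded.M _) (Grounded.M _))),
      fun n => ⟨0, fun d _ => ?_⟩⟩
    simp only [Sentence.iff, force_and, force_imp, force_M, Term.eval]
    constructor
    · intro m _ hyp
      rcases Nat.eq_zero_or_pos m with rfl | hm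
      · exact Or.inl rfl
      · exact Or.inr (Grounded.or (hyp.1.resolve_left (by omega))
          (hyp.2.resolve_left (by omega)))
    · intro m _ hyp
      rcases Nat.eq_zero_or_pos m with rfl | hm
      · exact ⟨Or.inl rfl, Or.inl rfl⟩
      · have hg := hyp.resolve_left (by omega)
        exact ⟨Or.inr (gr_or hg).1, Or.inr (gr_or hg).2⟩
  | ax2imp s t =>
    refine ⟨Grounded.and
      (Grounded.imp (Grounded.and (Grounded.M _) (Grounded.M _)) (Grounded.M _))
      (Grounded.imp (Grounded.M _) (Grounded.and (Grounded.M _) (Grounded.M _))),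
      fun n => ⟨0, fun d _ => ?_⟩⟩
    simp only [Sentence.iff, force_and, force_imp, force_M, Term.eval]
    constructor
    · intro m _ hyp
      rcases Nat.eq_zero_or_pos m with rfl | hm
      · exact Or.inl rfl
      · exact Or.inr (Grounded.imp (hyp.1.resolve_left (by omega))
          (hyp.2.resolve_left (by omega)))
    · intro m _ hyp
      rcases Nat.eq_zero_or_pos m with rfl | hm
      · exact ⟨Or.inl rfl, Or.inl rfl⟩
      · have hg := hyp.resolve_left (by omega)
        exact ⟨Or.inr (gr_imp hg).1, Or.inr (gr_imp hg).2⟩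
  | ax3 t =>
    refine ⟨Grounded.imp (Grounded.A _) (Grounded.M _), fun n => ⟨0, fun d _ => ?_⟩⟩
    simp only [force_imp, force_A, force_M]
    intro m _ hyp
    exact hyp.imp id And.left
  | ax4 s t =>
    refine ⟨Grounded.imp (Grounded.and (Grounded.A _) (Grounded.A _)) (Grounded.A _),
      fun n => ⟨0, fun d _ => ?_⟩⟩
    simp only [force_imp, force_and, force_A]
    intro m _ hyp
    rcases Nat.eq_zero_or_pos m with rfl | hm
    · exact Or.inl rfl
    · obtain ⟨gs, e1, H1⟩ := hyp.1.resolve_left (by omega)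
      obtain ⟨gt, e2, H2⟩ := hyp.2.resolve_left (by omega)
      refine Or.inr ⟨by simp only [Term.eval]; exact Grounded.and gs gt,
        max e1 e2, fun e he k hk => ?_⟩
      simp only [Term.eval, force_and]
      exact ⟨H1 e (le_trans (le_max_left _ _) he) k hk,
        H2 e (le_trans (le_max_right _ _) he) k hk⟩
  | ax5 s t =>
    refine ⟨Grounded.imp (Grounded.and (Grounded.A _) (Grounded.A _)) (Grounded.A _),
      fun n => ⟨0, fun d _ => ?_⟩⟩
    simp only [force_imp, force_and, force_A]
    intro m _ hyp
    rcases Nat.eq_zero_or_pos m with rfl | hm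
    · exact Or.inl rfl
    · obtain ⟨gs, e1, H1⟩ := hyp.1.resolve_left (by omega)
      obtain ⟨gst, e2, H2⟩ := hyp.2.resolve_left (by omega)
      have gst' : Grounded θ (Sentence.imp (s.eval θ) (t.eval θ)) := by
        simpa only [Term.eval] using gst
      refine Or.inr ⟨(gr_imp gst').2, max e1 e2, fun e he k hk => ?_⟩
      have hs := H1 e (le_trans (le_max_left _ _) he) k hk
      have hst := H2 e (le_trans (le_max_right _ _) he) k hk
      simp only [Term.eval, force_imp] at hst
      exact hst k le_rfl hs
  | ax6 t =>
    refine ⟨Grounded.imp (Grounded.M _) (Grounded.A _), fun n => ⟨0, fun d _ => ?_⟩⟩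
    simp only [force_imp]
    intro m _ hyp
    rcases force_M.mp hyp with h0 | hg
    · exact force_A.mpr (Or.inl h0)
    · obtain ⟨ds, hst⟩ := grounded_stable hg
      refine force_A.mpr (Or.inr ⟨?_, ds, fun e he k hk => ?_⟩)
      · simp only [Term.eval]
        exact Grounded.imp hg (Grounded.A t)
      · simp only [Term.eval, force_imp]
        intro j hj hjt
        refine force_A.mpr (Or.inr ⟨hg, ds, fun e' he' i hi => ?_⟩)
        have h1 : Force θ j ds (t.eval θ) := (hst e he j).mp hjt
        have h2 : Force θ j e' (t.eval θ) := (hst e' he' j).mpr h1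
        exact force_mono e' _ (le_of_lt hi) h2
  | ax7 t =>
    refine ⟨Grounded.imp (Grounded.M _) (Grounded.A _), fun n => ⟨0, fun d _ => ?_⟩⟩
    simp only [force_imp]
    intro m _ hyp
    rcases force_M.mp hyp with h0 | hg
    · exact force_A.mpr (Or.inl h0)
    · obtain ⟨ds, hst⟩ := grounded_stable hg
      refine force_A.mpr (Or.inr ⟨?_, ds + 1, fun e he k hk => ?_⟩)
      · simp only [Term.iff, Term.eval]
        exact Grounded.and (Grounded.imp hg (Grounded.T hg))
          (Grounded.imp (Grounded.T hg) hg)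
      · obtain ⟨e', rfl⟩ : ∃ e', e = e' + 1 := ⟨e - 1, by omega⟩
        simp only [Term.iff, Term.eval, force_and, force_imp]
        constructor
        · intro j _ hjt
          exact force_T_succ.mpr ⟨hg,
            (hst e' (by omega) j).mpr ((hst (e'+1) (by omega) j).mp hjt)⟩
        · intro j _ hjT
          obtain ⟨_, hf⟩ := force_T_succ.mp hjT
          exact (hst (e'+1) (by omega) j).mpr ((hst e' (by omega) j).mp hf)
  | ax8 t =>
    refine ⟨Grounded.imp (Grounded.imp (Grounded.M _) Grounded.bot) (Grounded.A _),
      fun n => ⟨0, fun d _ => ?_⟩⟩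
    simp only [Sentence.neg, force_imp]
    intro m _ hyp
    exact (force_bot.mp (hyp 0 (Nat.zero_le m) (force_M.mpr (Or.inl rfl)))).elim
  | ax9 h =>
    refine ⟨Grounded.imp (Grounded.M _) (Grounded.A _), fun n => ⟨0, fun d _ => ?_⟩⟩
    simp only [force_imp]
    intro m _ hyp
    rcases force_M.mp hyp with h0 | hg
    · exact force_A.mpr (Or.inl h0)
    · refine force_A.mpr (Or.inr ⟨?_, 0, fun e _ k _ => ?_⟩)
      · simp only [Term.iff, Term.eval, ← h]
        exact Grounded.and (Grounded.imp hg hg) (Grounded.imp hg hg)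
      · simp only [Term.iff, Term.eval, ← h, force_and, force_imp]
        exact ⟨fun j _ hj => hj, fun j _ hj => hj⟩
  | conj _ _ ih1 ih2 =>
    refine ⟨Grounded.and ih1.1 ih2.1, fun n => ?_⟩
    obtain ⟨d1, H1⟩ := ih1.2 n
    obtain ⟨d2, H2⟩ := ih2.2 n
    exact ⟨max d1 d2, fun d hd => force_and.mpr
      ⟨H1 d (le_trans (le_max_left _ _) hd), H2 d (le_trans (le_max_right _ _) hd)⟩⟩
  | mp _ _ ih1 ih2 =>
    refine ⟨(gr_imp ih2.1).2, fun n => ?_⟩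
    obtain ⟨d1, H1⟩ := ih1.2 n
    obtain ⟨d2, H2⟩ := ih2.2 n
    exact ⟨max d1 d2, fun d hd => force_imp.mp (H2 d (le_trans (le_max_right _ _) hd))
      n le_rfl (H1 d (le_trans (le_max_left _ _) hd))⟩
  | release _ ih =>
    obtain ⟨d₀, H⟩ := ih.2 1
    have hg : Grounded θ (_) :=
      ((force_A.mp (H d₀ le_rfl)).resolve_left (by omega)).1
    refine ⟨hg, fun n => ?_⟩
    obtain ⟨d₁, H1⟩ := ih.2 (n+1)
    obtain ⟨_, e₀, HH⟩ := (force_A.mp (H1 d₁ le_rfl)).resolve_left (by omega)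
    exact ⟨e₀, fun d hd => HH d hd n (Nat.lt_succ_self n)⟩

theorem atm_theorems_grounded (θ : ℕ → Sentence)
    (h1 : θ 1 = liar1) (h2 : θ 2 = liar2) :
    ∀ φ : Sentence, Thm θ φ → Grounded θ φ := by
  intro φ h
  exact (thm_inv h).1

end ATM
end

section
/- The formal system ATM proves the sentence ¬A[L₂] → A[⊥̇]; that is, ATM proves that if the assertible liar sentence is not assertible then the falsum sentence is assertible. -/
namespace ATM

/- The liar term ℓ = L₂ evaluates to the grounded sentence ¬A[ℓ], so axiom (9) gives
A[ℓ ↔̇ ¬̇Ȧ[ℓ]]. Together with A[ℓ →̇ Ȧ[ℓ]] from axiom (6) this yields A[¬̇ℓ], hence A[¬̇¬̇Ȧ[ℓ]];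
composing with A[⊥̇ →̇ Ȧ[⊥̇]] and releasing gives ¬A[ℓ] → A[⊥̇]. All reasoning under A is
intuitionistic Hilbert-style, and the M-premises of the logical axioms hold by (1) because every
term involved evaluates to a grounded sentence. -/

section

variable {θ : ℕ → Sentence} {s t u : Term}

lemma Thm.assert_mp (hst : Thm θ (Sentence.A (Term.imp s t))) (hs : Thm θ (Sentence.A s)) :
    Thm θ (Sentence.A t) :=
  Thm.mp (Thm.conj hs hst) (Thm.ax5 s t)

lemma Thm.assert_hilbertAxT {a : Term} (h : HilbertAxT s t u a) (hs : Grounded θ (s.eval θ))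
    (ht : Grounded θ (t.eval θ)) (hu : Grounded θ (u.eval θ)) : Thm θ (Sentence.A a) :=
  Thm.mp (Thm.conj (Thm.conj (Thm.ax1 hs) (Thm.ax1 ht)) (Thm.ax1 hu)) (Thm.logical h)

lemma Thm.assert_imp_trans (hs : Grounded θ (s.eval θ)) (ht : Grounded θ (t.eval θ))
    (hu : Grounded θ (u.eval θ)) (hst : Thm θ (Sentence.A (Term.imp s t)))
    (htu : Thm θ (Sentence.A (Term.imp t u))) : Thm θ (Sentence.A (Term.imp s u)) := by
  have htu' : Thm θ (Sentence.A (Term.imp s (Term.imp t u))) :=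
    (Thm.assert_hilbertAxT (HilbertAxT.imp1 _ s Term.bot) (Grounded.imp ht hu) hs
      Grounded.bot).assert_mp htu
  exact ((Thm.assert_hilbertAxT (HilbertAxT.imp2 s t u) hs ht hu).assert_mp htu').assert_mp hst

lemma Thm.assert_iff_mp (hs : Grounded θ (s.eval θ)) (ht : Grounded θ (t.eval θ))
    (h : Thm θ (Sentence.A (Term.iff s t))) : Thm θ (Sentence.A (Term.imp s t)) :=
  (Thm.assert_hilbertAxT (HilbertAxT.andE1 _ _ Term.bot) (Grounded.imp hs ht)
    (Grounded.imp ht hs) Grounded.bot).assert_mp h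

lemma Thm.assert_iff_mpr (hs : Grounded θ (s.eval θ)) (ht : Grounded θ (t.eval θ))
    (h : Thm θ (Sentence.A (Term.iff s t))) : Thm θ (Sentence.A (Term.imp t s)) :=
  (Thm.assert_hilbertAxT (HilbertAxT.andE2 _ _ Term.bot) (Grounded.imp hs ht)
    (Grounded.imp ht hs) Grounded.bot).assert_mp h

lemma Thm.assert_neg_of_assert_imp_neg_assert (ht : Grounded θ (t.eval θ))
    (h : Thm θ (Sentence.A (Term.imp t (Term.neg (Term.A t))))) :
    Thm θ (Sentence.A (Term.neg t)) :=
  ((Thm.assert_hilbertAxT (HilbertAxT.imp2 t (Term.A t) Term.bot) ht (Grounded.A t)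
    Grounded.bot).assert_mp h).assert_mp (Thm.mp (Thm.ax1 ht) (Thm.ax6 t))

end

theorem atm_proves_not_assert_liar_implies_assert_falsum_general (θ : ℕ → Sentence)
    (h2 : θ 2 = liar2) :
    Thm θ (Sentence.imp (Sentence.neg (Sentence.A (Term.L 2))) (Sentence.A Term.bot)) := by
  set ℓ := Term.L 2
  have hnA : Grounded θ ((Term.neg (Term.A ℓ)).eval θ) :=
    Grounded.imp (Grounded.A ℓ) Grounded.bot
  have hℓ_eval : ℓ.eval θ = (Term.neg (Term.A ℓ)).eval θ := h2
  have hℓ : Grounded θ (ℓ.eval θ) := hℓ_eval ▸ hnA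
  have hiff : Thm θ (Sentence.A (Term.iff ℓ (Term.neg (Term.A ℓ)))) :=
    Thm.mp (Thm.ax1 hℓ) (Thm.ax9 hℓ_eval)
  have hnℓ : Thm θ (Sentence.A (Term.neg ℓ)) :=
    Thm.assert_neg_of_assert_imp_neg_assert hℓ (Thm.assert_iff_mp hℓ hnA hiff)
  have hnnA : Thm θ (Sentence.A (Term.neg (Term.neg (Term.A ℓ)))) :=
    Thm.assert_imp_trans hnA hℓ Grounded.bot (Thm.assert_iff_mpr hℓ hnA hiff) hnℓ
  have hexfalso : Thm θ (Sentence.A (Term.imp Term.bot (Term.A Term.bot))) :=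
    Thm.assert_hilbertAxT (HilbertAxT.exfalso _ Term.bot Term.bot) (Grounded.A _) Grounded.bot
      Grounded.bot
  exact Thm.release (Thm.assert_imp_trans hnA Grounded.bot (Grounded.A _) hnnA hexfalso)

theorem atm_proves_not_assert_liar_implies_assert_falsum (θ : ℕ → Sentence)
    (h1 : θ 1 = liar1) (h2 : θ 2 = liar2) :
    Thm θ (Sentence.imp (Sentence.neg (Sentence.A (Term.L 2))) (Sentence.A Term.bot)) :=
  atm_proves_not_assert_liar_implies_assert_falsum_general θ h2

end ATM
end

section
/- The formal system obtained from ATM by adding the implication form of the release law as an axiom scheme — namely, the axiom A[t] → t̂ for every term t — is inconsistent: it proves the sentence ⊥. -/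
namespace ATM

/-- Theorems of the system obtained from ATM by adding the implication
form of the release law, `A[t] → t̂`, as an axiom scheme. -/
inductive ThmR (θ : ℕ → Sentence) : Sentence → Prop
  -- logical axioms: (M[s] ∧ M[t] ∧ M[u]) → A[Ȧ(s,t,u)]
  | logical {s t u a : Term} (h : HilbertAxT s t u a) :
      ThmR θ (Sentence.imp
        (Sentence.and (Sentence.and (Sentence.M s) (Sentence.M t)) (Sentence.M u))
        (Sentence.A a))
  -- (1) M[t] for t̂ grounded
  | ax1 {t : Term} (h : Grounded θ (t.eval θ)) : ThmR θ (Sentence.M t)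
  -- (2) (M[s] ∧ M[t]) ↔ M[s ∧̇ t] ↔ M[s ∨̇ t] ↔ M[s →̇ t]
  | ax2and (s t : Term) :
      ThmR θ (Sentence.iff (Sentence.and (Sentence.M s) (Sentence.M t))
        (Sentence.M (Term.and s t)))
  | ax2or (s t : Term) :
      ThmR θ (Sentence.iff (Sentence.and (Sentence.M s) (Sentence.M t))
        (Sentence.M (Term.or s t)))
  | ax2imp (s t : Term) :
      ThmR θ (Sentence.iff (Sentence.and (Sentence.M s) (Sentence.M t))
        (Sentence.M (Term.imp s t)))
  -- (3) A[t] → M[t]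
  | ax3 (t : Term) : ThmR θ (Sentence.imp (Sentence.A t) (Sentence.M t))
  -- (4) (A[s] ∧ A[t]) → A[s ∧̇ t]
  | ax4 (s t : Term) :
      ThmR θ (Sentence.imp (Sentence.and (Sentence.A s) (Sentence.A t))
        (Sentence.A (Term.and s t)))
  -- (5) (A[s] ∧ A[s →̇ t]) → A[t]
  | ax5 (s t : Term) :
      ThmR θ (Sentence.imp (Sentence.and (Sentence.A s) (Sentence.A (Term.imp s t)))
        (Sentence.A t))
  -- (6) M[t] → A[t →̇ Ȧ[t]]
  | ax6 (t : Term) :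
      ThmR θ (Sentence.imp (Sentence.M t) (Sentence.A (Term.imp t (Term.A t))))
  -- (7) M[t] → A[t ↔̇ Ṫ[t]]
  | ax7 (t : Term) :
      ThmR θ (Sentence.imp (Sentence.M t) (Sentence.A (Term.iff t (Term.T t))))
  -- (8) ¬M[t] → A[¬̇Ṫ[t]]
  | ax8 (t : Term) :
      ThmR θ (Sentence.imp (Sentence.neg (Sentence.M t))
        (Sentence.A (Term.neg (Term.T t))))
  -- (9) M[t] → A[t ↔̇ t'] whenever t̂ = t̂'
  | ax9 {t t' : Term} (h : t.eval θ = t'.eval θ) :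
      ThmR θ (Sentence.imp (Sentence.M t) (Sentence.A (Term.iff t t')))
  -- deduction rules
  | conj {φ ψ : Sentence} : ThmR θ φ → ThmR θ ψ → ThmR θ (Sentence.and φ ψ)
  | mp {φ ψ : Sentence} : ThmR θ φ → ThmR θ (Sentence.imp φ ψ) → ThmR θ ψ
  | release {t : Term} : ThmR θ (Sentence.A t) → ThmR θ (t.eval θ)
  -- the implication form of the release law, added as an axiom scheme
  | releaseAx (t : Term) : ThmR θ (Sentence.imp (Sentence.A t) (t.eval θ))

section Aux

variable {θ : ℕ → Sentence}

/-- Modus ponens inside assertibility, via axiom (5). -/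
private lemma amp {s t : Term} (hs : ThmR θ (Sentence.A s))
    (hst : ThmR θ (Sentence.A (Term.imp s t))) : ThmR θ (Sentence.A t) :=
  ThmR.mp (ThmR.conj hs hst) (ThmR.ax5 s t)

/-- Assertibility of a Hilbert axiom instance, given meaningfulness of the
parameter terms. -/
private lemma hilb {s t u a : Term} (hx : HilbertAxT s t u a)
    (ms : ThmR θ (Sentence.M s)) (mt : ThmR θ (Sentence.M t))
    (mu : ThmR θ (Sentence.M u)) : ThmR θ (Sentence.A a) :=
  ThmR.mp (ThmR.conj (ThmR.conj ms mt) mu) (ThmR.logical hx)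

end Aux

theorem atm_plus_release_implication_inconsistent (θ : ℕ → Sentence)
    (h1 : θ 1 = liar1) (h2 : θ 2 = liar2) :
    ThmR θ Sentence.bot := by
  -- notation
  set l : Term := Term.L 2 with hldef
  set a : Term := Term.A l with hadef
  set na : Term := Term.imp a Term.bot with hnadef
  set q : Term := Term.imp a na with hqdef
  -- groundedness facts
  have g_l : Grounded θ (l.eval θ) := by
    rw [show l.eval θ = θ 2 from rfl, h2]
    exact Grounded.imp (Grounded.A _) Grounded.bot
  have g_a : Grounded θ (a.eval θ) := Grounded.A _
  have g_bot : Grounded θ (Term.bot.eval θ) := Grounded.bot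
  have g_na : Grounded θ (na.eval θ) := Grounded.imp g_a g_bot
  have g_q : Grounded θ (q.eval θ) := Grounded.imp g_a g_na
  -- meaningfulness facts
  have M_l : ThmR θ (Sentence.M l) := ThmR.ax1 g_l
  have M_a : ThmR θ (Sentence.M a) := ThmR.ax1 g_a
  have M_bot : ThmR θ (Sentence.M Term.bot) := ThmR.ax1 g_bot
  have M_na : ThmR θ (Sentence.M na) := ThmR.ax1 g_na
  have M_q : ThmR θ (Sentence.M q) := ThmR.ax1 g_q
  have M_la : ThmR θ (Sentence.M (Term.imp l a)) := ThmR.ax1 (Grounded.imp g_l g_a)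
  have M_lna : ThmR θ (Sentence.M (Term.imp l na)) := ThmR.ax1 (Grounded.imp g_l g_na)
  have M_nal : ThmR θ (Sentence.M (Term.imp na l)) := ThmR.ax1 (Grounded.imp g_na g_l)
  have M_aa : ThmR θ (Sentence.M (Term.imp a a)) := ThmR.ax1 (Grounded.imp g_a g_a)
  -- the release axiom at l, as the sentence eval q = A[l] → (A[l] → ⊥)
  have hQ : ThmR θ (q.eval θ) := by
    have h := ThmR.releaseAx (θ := θ) l
    rw [show l.eval θ = θ 2 from rfl, h2] at h
    exact h
  -- capture it: assertibility proves q = (a →̇ ¬̇a)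
  have cap : ThmR θ (Sentence.A (Term.imp q (Term.A q))) := ThmR.mp M_q (ThmR.ax6 q)
  have h_q : ThmR θ (Sentence.A q) := ThmR.mp hQ (ThmR.release cap)
  -- assertibility proves a → a
  have k1 : ThmR θ (Sentence.A (Term.imp a (Term.imp (Term.imp a a) a))) :=
    hilb (HilbertAxT.imp1 a (Term.imp a a) Term.bot) M_a M_aa M_bot
  have k2 : ThmR θ (Sentence.A (Term.imp (Term.imp a (Term.imp (Term.imp a a) a))
      (Term.imp (Term.imp a (Term.imp a a)) (Term.imp a a)))) :=
    hilb (HilbertAxT.imp2 a (Term.imp a a) a) M_a M_aa M_a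
  have k3 : ThmR θ (Sentence.A (Term.imp (Term.imp a (Term.imp a a)) (Term.imp a a))) :=
    amp k1 k2
  have k4 : ThmR θ (Sentence.A (Term.imp a (Term.imp a a))) :=
    hilb (HilbertAxT.imp1 a a Term.bot) M_a M_a M_bot
  have h_aa : ThmR θ (Sentence.A (Term.imp a a)) := amp k4 k3
  -- assertibility proves ¬a  (from a → ¬a and a → a)
  have t1 : ThmR θ (Sentence.A (Term.imp (Term.imp a (Term.imp a Term.bot))
      (Term.imp (Term.imp a a) (Term.imp a Term.bot)))) :=
    hilb (HilbertAxT.imp2 a a Term.bot) M_a M_a M_bot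
  have t2 : ThmR θ (Sentence.A (Term.imp (Term.imp a a) na)) := amp h_q t1
  have h_na : ThmR θ (Sentence.A na) := amp h_aa t2
  -- ax9: assertibility proves l ↔̇ ¬̇a, hence ¬a → l
  have heq : l.eval θ = na.eval θ := by
    rw [show l.eval θ = θ 2 from rfl, h2]
    rfl
  have h_iff : ThmR θ (Sentence.A (Term.and (Term.imp l na) (Term.imp na l))) :=
    ThmR.mp M_l (ThmR.ax9 heq)
  have h_nal : ThmR θ (Sentence.A (Term.imp na l)) :=
    amp h_iff (hilb (HilbertAxT.andE2 (Term.imp l na) (Term.imp na l) Term.bot)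
      M_lna M_nal M_bot)
  -- ax6: assertibility proves l → a, hence ¬a → a
  have h_la : ThmR θ (Sentence.A (Term.imp l a)) := ThmR.mp M_l (ThmR.ax6 l)
  have c1 : ThmR θ (Sentence.A (Term.imp (Term.imp l a) (Term.imp na (Term.imp l a)))) :=
    hilb (HilbertAxT.imp1 (Term.imp l a) na Term.bot) M_la M_na M_bot
  have c2 : ThmR θ (Sentence.A (Term.imp na (Term.imp l a))) := amp h_la c1
  have c3 : ThmR θ (Sentence.A (Term.imp (Term.imp na (Term.imp l a))
      (Term.imp (Term.imp na l) (Term.imp na a)))) :=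
    hilb (HilbertAxT.imp2 na l a) M_na M_l M_a
  have c4 : ThmR θ (Sentence.A (Term.imp (Term.imp na l) (Term.imp na a))) := amp c2 c3
  have h_naa : ThmR θ (Sentence.A (Term.imp na a)) := amp h_nal c4
  -- assertibility proves a, hence ⊥̇
  have h_a : ThmR θ (Sentence.A a) := amp h_na h_naa
  have h_bot : ThmR θ (Sentence.A Term.bot) := amp h_a h_na
  exact ThmR.release h_bot

end ATM
end
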